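/- arXiv:math/0607653 — 11 statements merged into one kernel-verified Lean document; each statement's English description precedes it below -/
import Mathlib

section
/- Let λ ∈ ℂ with λ ≠ 0 and λ ≠ 1. Then B_0(λ) = (Log λ/(λ − 1))·H_0(λ⁻¹), and for every integer n ≥ 1, B_n(λ) = (Log λ/(λ − 1))·H_n(λ⁻¹) + (n/(λ − 1))·H_{n−1}(λ⁻¹). -/
/-- The λ-Bernoulli numbers `B_n(λ)`, defined by `B_0(λ) = Log λ / (λ - 1)` and, for `n ≥ 1`,
by the recurrence `λ·∑_{k=0}^{n} C(n,k)·B_k(λ) - B_n(λ) = (1 if n = 1, 0 if n ≥ 2)`,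
encoding the generating function `(Log λ + t)/(λ e^t - 1) = ∑ B_n(λ) t^n/n!`. -/
noncomputable def lambdaBernoulli (lam : ℂ) : ℕ → ℂ
  | 0 => Complex.log lam / (lam - 1)
  | n + 1 =>
      ((if n = 0 then (1 : ℂ) else 0) -
        lam * ∑ k : Fin (n + 1), ((n + 1).choose (k : ℕ) : ℂ) * lambdaBernoulli lam k) / (lam - 1)

/-- The Frobenius–Euler numbers `H_n(u)`, defined by `H_0(u) = 1` and, for `n ≥ 1`, by the
recurrence `∑_{k=0}^{n} C(n,k)·H_k(u) = u·H_n(u)`, encoding the generating function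
`(1 - u)/(e^t - u) = ∑ H_n(u) t^n/n!`. -/
noncomputable def frobeniusEuler (u : ℂ) : ℕ → ℂ
  | 0 => 1
  | n + 1 => (∑ k : Fin (n + 1), ((n + 1).choose (k : ℕ) : ℂ) * frobeniusEuler u k) / (u - 1)

/-!
Multiplied by `λ - 1`, the claim reads `(λ - 1) B_n(λ) = Log λ · H_n(λ⁻¹) + n H_{n-1}(λ⁻¹)`,
which follows by strong induction on `n`: inserting it into the recurrence for `B_{n+1}(λ)`,
the `Log λ` part collapses by the recurrence of `H(λ⁻¹)` at `n + 1`, and the other part, after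
the reindexing `k C(n+1, k) = (n + 1) C(n, k - 1)`, by the recurrence at `n`. The two recurrences
match because `λ (λ⁻¹ - 1) = 1 - λ`.
-/

open Finset

theorem sum_range_succ_choose_mul_mul_pred {R : Type*} [CommSemiring R] (f : ℕ → R) (n : ℕ) :
    ∑ k ∈ range (n + 1), ((n + 1).choose k : R) * k * f (k - 1) =
      (n + 1) * ∑ k ∈ range n, (n.choose k : R) * f k := by
  rw [sum_range_succ', Nat.cast_zero, mul_zero, zero_mul, add_zero, mul_sum]
  refine sum_congr rfl fun k _ => ?_
  rw [Nat.add_sub_cancel, ← mul_assoc]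
  congr 1
  exact_mod_cast congrArg (Nat.cast : ℕ → R) (Nat.add_one_mul_choose_eq n k).symm

theorem frobeniusEuler_zero (u : ℂ) : frobeniusEuler u 0 = 1 := by
  rw [frobeniusEuler]

theorem frobeniusEuler_one (u : ℂ) : frobeniusEuler u 1 = (u - 1)⁻¹ := by
  simp [frobeniusEuler, frobeniusEuler_zero]

theorem sum_range_choose_mul_frobeniusEuler {u : ℂ} (hu : u ≠ 1) (n : ℕ) :
    ∑ k ∈ range (n + 1), ((n + 1).choose k : ℂ) * frobeniusEuler u k =
      (u - 1) * frobeniusEuler u (n + 1) := by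
  rw [frobeniusEuler, mul_div_cancel₀ _ (sub_ne_zero.mpr hu), Fin.sum_univ_eq_sum_range
    (fun k => ((n + 1).choose k : ℂ) * frobeniusEuler u k)]

theorem sub_one_mul_lambdaBernoulli_succ {lam : ℂ} (h1 : lam ≠ 1) (n : ℕ) :
    (lam - 1) * lambdaBernoulli lam (n + 1) =
      (if n = 0 then 1 else 0) -
        lam * ∑ k ∈ range (n + 1), ((n + 1).choose k : ℂ) * lambdaBernoulli lam k := by
  rw [lambdaBernoulli, mul_div_cancel₀ _ (sub_ne_zero.mpr h1), Fin.sum_univ_eq_sum_range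
    (fun k => ((n + 1).choose k : ℂ) * lambdaBernoulli lam k)]

theorem sub_one_mul_lambdaBernoulli {lam : ℂ} (h0 : lam ≠ 0) (h1 : lam ≠ 1) (n : ℕ) :
    (lam - 1) * lambdaBernoulli lam n =
      Complex.log lam * frobeniusEuler lam⁻¹ n + n * frobeniusEuler lam⁻¹ (n - 1) := by
  have hc : lam - 1 ≠ 0 := sub_ne_zero.mpr h1
  have hu : lam⁻¹ ≠ 1 := inv_ne_one.mpr h1
  induction n using Nat.strong_induction_on with | _ n ih => ?_
  rcases n with _ | n
  · simp [lambdaBernoulli, frobeniusEuler_zero, mul_div_cancel₀ _ hc]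
  have hS : (lam - 1) * ∑ k ∈ range (n + 1), ((n + 1).choose k : ℂ) * lambdaBernoulli lam k =
      Complex.log lam * ((lam⁻¹ - 1) * frobeniusEuler lam⁻¹ (n + 1)) +
        (n + 1) * ∑ k ∈ range n, (n.choose k : ℂ) * frobeniusEuler lam⁻¹ k := by
    rw [← sum_range_choose_mul_frobeniusEuler hu, ← sum_range_succ_choose_mul_mul_pred, mul_sum,
      mul_sum, ← sum_add_distrib]
    refine sum_congr rfl fun k hk => ?_
    rw [mul_left_comm, ih k (mem_range.mp hk)]
    ring
  apply mul_left_cancel₀ hc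
  rw [sub_one_mul_lambdaBernoulli_succ h1, mul_sub, mul_left_comm, hS]
  rcases n with _ | n
  · rw [frobeniusEuler_one, frobeniusEuler_zero, if_pos rfl, range_zero, sum_empty]
    field_simp
    ring
  · rw [sum_range_choose_mul_frobeniusEuler hu]
    field_simp
    push_cast
    ring

/-- For `λ ∈ ℂ`, `λ ≠ 0`, `λ ≠ 1`, one has
`B_0(λ) = (Log λ/(λ - 1))·H_0(λ⁻¹)` and, for all `n ≥ 1`,
`B_n(λ) = (Log λ/(λ - 1))·H_n(λ⁻¹) + (n/(λ - 1))·H_{n-1}(λ⁻¹)`. -/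
theorem lambdaBernoulli_eq_frobeniusEuler (lam : ℂ) (h0 : lam ≠ 0) (h1 : lam ≠ 1) :
    lambdaBernoulli lam 0 = Complex.log lam / (lam - 1) * frobeniusEuler lam⁻¹ 0 ∧
    ∀ n : ℕ, 1 ≤ n →
      lambdaBernoulli lam n =
        Complex.log lam / (lam - 1) * frobeniusEuler lam⁻¹ n +
          (n : ℂ) / (lam - 1) * frobeniusEuler lam⁻¹ (n - 1) := by
  have hc : lam - 1 ≠ 0 := sub_ne_zero.mpr h1
  have key (n : ℕ) : lambdaBernoulli lam n =
      Complex.log lam / (lam - 1) * frobeniusEuler lam⁻¹ n +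
        (n : ℂ) / (lam - 1) * frobeniusEuler lam⁻¹ (n - 1) := by
    rw [div_mul_eq_mul_div, div_mul_eq_mul_div, ← add_div, eq_div_iff hc, mul_comm,
      sub_one_mul_lambdaBernoulli h0 h1]
  exact ⟨by simpa using key 0, fun n _ => key n⟩
end

section
/- Let λ be a real number with λ > 0 and λ ≠ 1, let d ≥ 1 and n ≥ 0 be integers, and let x ∈ ℂ. Then B_n(λ; x) = d^{n−1}·∑_{a=0}^{d−1} λ^a·B_n(λ^d; (x + a)/d) (the distribution/multiplication formula for λ-Bernoulli polynomials). -/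
/-- The λ-Bernoulli polynomials `B_n(λ; x) = ∑_{k=0}^{n} C(n,k)·B_k(λ)·x^{n-k}`. -/
noncomputable def lambdaBernoulliPoly (lam : ℂ) (n : ℕ) (x : ℂ) : ℂ :=
  ∑ k ∈ Finset.range (n + 1), (n.choose k : ℂ) * lambdaBernoulli lam k * x ^ (n - k)

/-!
Both sides, as functions of `(n, x)`, are Appell sequences, `F n (x + y) = ∑ C(n,k) F k x y^(n-k)`,
and satisfy the same difference equation `λ F n (x + 1) - F n x = log λ · x^n + n x^(n-1)`:
for the left side this is the defining recurrence of `B_n(λ)`, for the right side it follows by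
telescoping the sum over `a` together with `log (λ^d) = d log λ`. The difference `E` of two such
sequences satisfies `λ E n (x + 1) = E n x`, and by strong induction on `n` the Appell property
makes `E n` periodic of period 1, whence `(λ - 1) E n = 0`.
-/

open Finset

section Appell

variable {K : Type*}

def IsAppell [CommSemiring K] (F : ℕ → K → K) : Prop :=
  ∀ n x y, F n (x + y) = ∑ k ∈ range (n + 1), (n.choose k : K) * F k x * y ^ (n - k)

theorem isAppell_sum_choose_mul_pow [CommSemiring K] (b : ℕ → K) :
    IsAppell fun n x => ∑ k ∈ range (n + 1), (n.choose k : K) * b k * x ^ (n - k) := by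
  intro n x y
  let f k j := (n.choose (k + j) * (k + j).choose k : K) * b k * x ^ j * y ^ (n - (k + j))
  calc ∑ k ∈ range (n + 1), (n.choose k : K) * b k * (x + y) ^ (n - k)
      = ∑ k ∈ range (n + 1), ∑ j ∈ range (n + 1 - k), f k j := by
        refine sum_congr rfl fun k hk => ?_
        have hk : k ≤ n := Nat.lt_succ_iff.1 (mem_range.1 hk)
        rw [add_pow, mul_sum, Nat.sub_add_comm hk]
        refine sum_congr rfl fun j hj => ?_
        have hj : j ≤ n - k := Nat.lt_succ_iff.1 (mem_range.1 hj)
        have hc : n.choose (k + j) * (k + j).choose k = n.choose k * (n - k).choose j := by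
          rw [Nat.choose_mul (Nat.le_add_right k j), Nat.add_sub_cancel_left]
        simp only [f, show n - (k + j) = n - k - j by omega]
        rw [← Nat.cast_mul, hc]; push_cast; ring
    _ = ∑ m ∈ range (n + 1), ∑ k ∈ range (m + 1), f k (m - k) := (sum_range_diag_flip _ f).symm
    _ = _ := by
        refine sum_congr rfl fun m _ => ?_
        rw [mul_sum, sum_mul]
        refine sum_congr rfl fun k hk => ?_
        have hk : k ≤ m := Nat.lt_succ_iff.1 (mem_range.1 hk)
        simp only [f, Nat.add_sub_cancel' hk]
        ring

theorem IsAppell.sub [CommRing K] {F G : ℕ → K → K} (hF : IsAppell F) (hG : IsAppell G) :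
    IsAppell (F - G) := by
  intro n x y
  simp only [Pi.sub_apply, hF n x y, hG n x y, ← sum_sub_distrib]
  exact sum_congr rfl fun k _ => by ring

theorem IsAppell.eq_zero_of_mul_shift_eq [CommRing K] [NoZeroDivisors K] {E : ℕ → K → K}
    (hE : IsAppell E) {μ : K} (hμ : μ ≠ 1) (hshift : ∀ n x, μ * E n (x + 1) = E n x) :
    E = 0 := by
  funext n x
  show E n x = 0
  induction n using Nat.strong_induction_on generalizing x with
  | _ n ih =>
    have hperiodic : E n (x + 1) = E n x := by
      rw [hE, sum_range_succ, sum_eq_zero fun k hk => by rw [ih k (mem_range.1 hk) x]; ring]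
      simp
    have h : (μ - 1) * E n x = 0 := by linear_combination hshift n x - μ * hperiodic
    exact (mul_eq_zero.1 h).resolve_left (sub_ne_zero.2 hμ)

theorem IsAppell.eq_of_mul_shift_sub_eq [CommRing K] [NoZeroDivisors K] {F G : ℕ → K → K}
    (hF : IsAppell F) (hG : IsAppell G) {μ : K} (hμ : μ ≠ 1)
    (h : ∀ n x, μ * F n (x + 1) - F n x = μ * G n (x + 1) - G n x) : F = G :=
  sub_eq_zero.1 <| (hF.sub hG).eq_zero_of_mul_shift_eq hμ fun n x => by
    simp only [Pi.sub_apply]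
    linear_combination h n x

def distributionTransform [Field K] (F : ℕ → K → K) (c : K) (d n : ℕ) (x : K) : K :=
  (d : K) ^ ((n : ℤ) - 1) * ∑ a ∈ range d, c ^ a * F n ((x + a) / d)

theorem IsAppell.distributionTransform [Field K] {F : ℕ → K → K} (hF : IsAppell F) (c : K)
    {d : ℕ} (hd : (d : K) ≠ 0) : IsAppell (distributionTransform F c d) := by
  intro n x y
  have hpow : ∀ k ≤ n, (d : K) ^ ((n : ℤ) - 1) * (y / d) ^ (n - k) =
      (d : K) ^ ((k : ℤ) - 1) * y ^ (n - k) := by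
    intro k hk
    rw [div_pow, ← zpow_natCast (d : K), div_eq_mul_inv, ← zpow_neg, mul_left_comm,
      ← zpow_add₀ hd, Nat.cast_sub hk]
    ring_nf
  have hsplit : ∀ a : K, (x + y + a) / d = (x + a) / d + y / d := fun a => by ring
  simp only [_root_.distributionTransform, hsplit, hF _ _ (y / d), mul_sum, sum_mul]
  rw [sum_comm]
  refine sum_congr rfl fun k hk => sum_congr rfl fun a _ => ?_
  linear_combination (c ^ a * n.choose k * F k ((x + a) / d)) *
    hpow k (Nat.lt_succ_iff.1 (mem_range.1 hk))

theorem distributionTransform_mul_shift_sub [Field K] (F : ℕ → K → K) (c : K) {d : ℕ}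
    (hd : (d : K) ≠ 0) (n : ℕ) (x : K) :
    c * distributionTransform F c d n (x + 1) - distributionTransform F c d n x =
      (d : K) ^ ((n : ℤ) - 1) * (c ^ d * F n (x / d + 1) - F n (x / d)) := by
  let g (a : ℕ) : K := c ^ a * F n ((x + a) / d)
  have hshift : ∀ a : ℕ, c * (c ^ a * F n ((x + 1 + a) / d)) = g (a + 1) := fun a => by
    simp only [g]; push_cast; ring_nf
  have htelescope := sum_range_sub g d
  unfold distributionTransform
  rw [mul_left_comm, mul_sum, sum_congr rfl fun a _ => hshift a, ← mul_sub, ← sum_sub_distrib,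
    htelescope]
  simp only [g, add_div, div_self hd, Nat.cast_zero, zero_div, add_zero, pow_zero, one_mul]

end Appell

theorem isAppell_lambdaBernoulliPoly (μ : ℂ) : IsAppell (lambdaBernoulliPoly μ) :=
  isAppell_sum_choose_mul_pow (lambdaBernoulli μ)

theorem mul_lambdaBernoulliPoly_one_sub {μ : ℂ} (hμ : μ ≠ 1) (k : ℕ) :
    μ * lambdaBernoulliPoly μ k 1 - lambdaBernoulli μ k =
      (if k = 0 then Complex.log μ else 0) + if k = 1 then 1 else 0 := by
  have hμ' : μ - 1 ≠ 0 := sub_ne_zero.2 hμ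
  simp only [lambdaBernoulliPoly, one_pow, mul_one]
  cases k with
  | zero => simp [lambdaBernoulli]; field_simp
  | succ m =>
    have hrec : (μ - 1) * lambdaBernoulli μ (m + 1) = (if m = 0 then 1 else 0) -
        μ * ∑ j ∈ range (m + 1), ((m + 1).choose j : ℂ) * lambdaBernoulli μ j := by
      rw [lambdaBernoulli, mul_div_cancel₀ _ hμ',
        Fin.sum_univ_eq_sum_range (fun j => ((m + 1).choose j : ℂ) * lambdaBernoulli μ j)]
    rw [sum_range_succ, Nat.choose_self]
    simp only [Nat.add_one_ne_zero, if_false, Nat.add_eq_right, zero_add]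
    linear_combination hrec

theorem lambdaBernoulliPoly_mul_shift_sub {μ : ℂ} (hμ : μ ≠ 1) (n : ℕ) (x : ℂ) :
    μ * lambdaBernoulliPoly μ n (x + 1) - lambdaBernoulliPoly μ n x =
      Complex.log μ * x ^ n + n * x ^ (n - 1) := by
  calc μ * lambdaBernoulliPoly μ n (x + 1) - lambdaBernoulliPoly μ n x
      = ∑ k ∈ range (n + 1), (n.choose k : ℂ) *
          (μ * lambdaBernoulliPoly μ k 1 - lambdaBernoulli μ k) * x ^ (n - k) := by
        rw [add_comm x 1, isAppell_lambdaBernoulliPoly μ n 1 x, lambdaBernoulliPoly, mul_sum,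
          ← sum_sub_distrib]
        exact sum_congr rfl fun k _ => by ring
    _ = _ := by
        simp only [mul_lambdaBernoulliPoly_one_sub hμ, mul_add, add_mul, sum_add_distrib]
        cases n <;> simp

theorem distributionTransform_lambdaBernoulliPoly_mul_shift_sub {c : ℂ} {d : ℕ} (hc : c ^ d ≠ 1)
    (hd : (d : ℂ) ≠ 0) (n : ℕ) (x : ℂ) :
    c * distributionTransform (lambdaBernoulliPoly (c ^ d)) c d n (x + 1) -
        distributionTransform (lambdaBernoulliPoly (c ^ d)) c d n x =
      Complex.log (c ^ d) / d * x ^ n + n * x ^ (n - 1) := by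
  rw [distributionTransform_mul_shift_sub _ _ hd, lambdaBernoulliPoly_mul_shift_sub hc]
  cases n with
  | zero => simp [div_eq_inv_mul]
  | succ m =>
    rw [Nat.cast_add_one, add_sub_cancel_right, zpow_natCast, Nat.add_sub_cancel, div_pow, div_pow]
    field_simp
    ring

/-- distribution (multiplication) formula for the λ-Bernoulli polynomials:
for real `λ > 0`, `λ ≠ 1`, integers `d ≥ 1`, `n ≥ 0` and `x ∈ ℂ`,
`B_n(λ; x) = d^{n-1}·∑_{a=0}^{d-1} λ^a·B_n(λ^d; (x + a)/d)`. -/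
theorem lambdaBernoulliPoly_multiplication (lam : ℝ) (hpos : 0 < lam) (h1 : lam ≠ 1)
    (d : ℕ) (hd : 1 ≤ d) (n : ℕ) (x : ℂ) :
    lambdaBernoulliPoly (lam : ℂ) n x =
      (d : ℂ) ^ ((n : ℤ) - 1) *
        ∑ a ∈ Finset.range d,
          (lam : ℂ) ^ a * lambdaBernoulliPoly ((lam : ℂ) ^ d) n ((x + (a : ℂ)) / (d : ℂ)) := by
  have hd0 : (d : ℂ) ≠ 0 := Nat.cast_ne_zero.2 (by omega)
  have hlam : (lam : ℂ) ≠ 1 := by exact_mod_cast h1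
  have hlamd : (lam : ℂ) ^ d ≠ 1 := by
    exact_mod_cast (pow_eq_one_iff_of_nonneg hpos.le (by omega)).not.2 h1
  have hlog : Complex.log ((lam : ℂ) ^ d) / d = Complex.log lam := by
    rw [← Complex.ofReal_pow, ← Complex.ofReal_log (pow_nonneg hpos.le d), Real.log_pow,
      Complex.ofReal_mul, Complex.ofReal_log hpos.le, Complex.ofReal_natCast,
      mul_div_cancel_left₀ _ hd0]
  have hunique := (isAppell_lambdaBernoulliPoly lam).eq_of_mul_shift_sub_eq
    ((isAppell_lambdaBernoulliPoly _).distributionTransform lam hd0) hlam fun n x => by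
      rw [lambdaBernoulliPoly_mul_shift_sub hlam,
        distributionTransform_lambdaBernoulliPoly_mul_shift_sub hlamd hd0, hlog]
  exact congrFun (congrFun hunique n) x
end

section
/- Let λ be a real number with λ > 0 and λ ≠ 1, and let m ≥ 1 and n ≥ 0 be integers. Then m·B_n(λ) = ∑_{j=0}^{n} C(n,j)·B_j(λ^m)·m^j·∑_{a=0}^{m−1} λ^a·a^{n−j}, with the convention 0^0 = 1 (Gauss multiplicative formula for λ-Bernoulli numbers). -/
open PowerSeries Finset Nat

theorem rescale_C {R : Type*} [CommSemiring R] (a c : R) : rescale a (C c) = C c := by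
  ext n
  rcases n with _ | n <;> simp [coeff_rescale, coeff_C]

section Egf

variable {K : Type*} [Field K]

noncomputable def egf (f : ℕ → K) : K⟦X⟧ := mk fun n => f n / n !

theorem coeff_egf (f : ℕ → K) (n : ℕ) : coeff n (egf f) = f n / n ! := coeff_mk _ _

theorem egf_injective [CharZero K] : Function.Injective (egf : (ℕ → K) → K⟦X⟧) := by
  intro f g h
  funext n
  have := congrArg (coeff n) h
  rwa [coeff_egf, coeff_egf, div_left_inj' (Nat.cast_ne_zero.2 (factorial_ne_zero n))] at this

theorem egf_mul_egf [CharZero K] (f g : ℕ → K) :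
    egf f * egf g = egf fun n => ∑ j ∈ range (n + 1), (n.choose j : K) * f j * g (n - j) := by
  ext n
  rw [coeff_mul, Nat.sum_antidiagonal_eq_sum_range_succ_mk, coeff_egf, sum_div]
  refine sum_congr rfl fun j hj => ?_
  have hjn := Nat.le_of_lt_succ (mem_range.1 hj)
  have hchoose : (n.choose j : K) ≠ 0 := by exact_mod_cast (Nat.choose_pos hjn).ne'
  rw [coeff_egf, coeff_egf, ← Nat.choose_mul_factorial_mul_factorial hjn]
  push_cast
  field_simp

theorem C_mul_egf (c : K) (f : ℕ → K) : C c * egf f = egf fun n => c * f n := by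
  ext n
  simp only [coeff_C_mul, coeff_egf, mul_div_assoc]

theorem rescale_egf (c : K) (f : ℕ → K) : rescale c (egf f) = egf fun n => c ^ n * f n := by
  rw [egf, rescale_mk]
  simp only [egf, mul_div_assoc]

theorem exp_eq_egf_one [CharZero K] : exp K = egf 1 := by
  ext n
  simp [coeff_exp, coeff_egf]

theorem sum_egf {ι : Type*} (s : Finset ι) (f : ι → ℕ → K) :
    ∑ i ∈ s, egf (f i) = egf fun n => ∑ i ∈ s, f i n := by
  ext n
  simp only [map_sum, coeff_egf, sum_div]

theorem C_mul_exp_pow [CharZero K] (c : K) (a : ℕ) :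
    (C c * exp K) ^ a = egf fun n => c ^ a * (a : K) ^ n := by
  rw [mul_pow, ← map_pow, exp_pow_eq_rescale_exp, exp_eq_egf_one, rescale_egf, C_mul_egf]
  simp

theorem egf_sum_pow_mul_pow [CharZero K] (c : K) (m : ℕ) :
    egf (fun r => ∑ a ∈ range m, c ^ a * (a : K) ^ r) = ∑ a ∈ range m, (C c * exp K) ^ a := by
  simp only [C_mul_exp_pow, sum_egf]

end Egf

theorem lambdaBernoulli_zero (lam : ℂ) :
    lambdaBernoulli lam 0 = Complex.log lam / (lam - 1) := by
  rw [lambdaBernoulli]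

theorem lambdaBernoulli_recurrence {lam : ℂ} (hlam : lam ≠ 1) (n : ℕ) :
    lam * ∑ k ∈ range (n + 2), ((n + 1).choose k : ℂ) * lambdaBernoulli lam k
      - lambdaBernoulli lam (n + 1) = if n = 0 then 1 else 0 := by
  have hsub : lam - 1 ≠ 0 := sub_ne_zero.2 hlam
  rw [sum_range_succ, Nat.choose_self, lambdaBernoulli,
    Fin.sum_univ_eq_sum_range (fun k => ((n + 1).choose k : ℂ) * lambdaBernoulli lam k)]
  field_simp
  ring

theorem egf_lambdaBernoulli {lam : ℂ} (hlam : lam ≠ 1) :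
    (C lam * exp ℂ - 1) * egf (lambdaBernoulli lam) = C (Complex.log lam) + X := by
  rw [sub_mul, one_mul, mul_assoc, mul_comm (exp ℂ), exp_eq_egf_one, egf_mul_egf, C_mul_egf]
  ext n
  rw [map_sub, coeff_egf, coeff_egf, ← sub_div, map_add, coeff_C, coeff_X]
  rcases n with _ | n
  · simp only [zero_add, sum_range_one, Pi.one_apply, mul_one, Nat.choose_self, Nat.cast_one,
      one_mul, lambdaBernoulli_zero, factorial_zero, div_one, if_true, zero_ne_one, if_false,
      add_zero]
    field_simp [sub_ne_zero.2 hlam]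
  · simp only [Pi.one_apply, mul_one]
    rw [lambdaBernoulli_recurrence hlam]
    rcases n with _ | n <;> simp

theorem lambdaBernoulli_gauss_multiplication_of_log_pow {lam : ℂ} {m : ℕ} (hlam : lam ≠ 1)
    (hlam_pow : lam ^ m ≠ 1) (hlog : Complex.log (lam ^ m) = m * Complex.log lam) (n : ℕ) :
    (m : ℂ) * lambdaBernoulli lam n =
      ∑ j ∈ range (n + 1), (n.choose j : ℂ) * lambdaBernoulli (lam ^ m) j * (m : ℂ) ^ j *
        ∑ a ∈ range m, lam ^ a * (a : ℂ) ^ (n - j) := by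
  set E : ℂ⟦X⟧ := C lam * exp ℂ
  have hunit : IsUnit (E - 1) := by
    rw [isUnit_iff_constantCoeff]
    simpa [E] using (sub_ne_zero.2 hlam).isUnit
  have hrescale : (E ^ m - 1) * rescale (m : ℂ) (egf (lambdaBernoulli (lam ^ m))) =
      C (m : ℂ) * (C (Complex.log lam) + X) := by
    have h := congrArg (rescale (m : ℂ)) (egf_lambdaBernoulli hlam_pow)
    rwa [map_mul, map_sub, map_mul, map_one, rescale_C, ← exp_pow_eq_rescale_exp, map_add,
      rescale_C, rescale_X, hlog, map_pow, ← mul_pow, map_mul, ← mul_add] at h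
  have hegf : egf (fun n => ∑ j ∈ range (n + 1), (n.choose j : ℂ) * lambdaBernoulli (lam ^ m) j *
      (m : ℂ) ^ j * ∑ a ∈ range m, lam ^ a * (a : ℂ) ^ (n - j)) =
      rescale (m : ℂ) (egf (lambdaBernoulli (lam ^ m))) * ∑ a ∈ range m, E ^ a := by
    rw [← egf_sum_pow_mul_pow, rescale_egf, egf_mul_egf]
    congr! 3 with n j
    ring
  apply congrFun (egf_injective (hunit.mul_left_cancel ?_)) n
  calc (E - 1) * egf (fun n => (m : ℂ) * lambdaBernoulli lam n)
      = C (m : ℂ) * ((E - 1) * egf (lambdaBernoulli lam)) := by rw [← C_mul_egf]; ring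
    _ = (E ^ m - 1) * rescale (m : ℂ) (egf (lambdaBernoulli (lam ^ m))) := by
      rw [egf_lambdaBernoulli hlam, hrescale]
    _ = _ := by rw [hegf, ← mul_geom_sum]; ring

/-- Gauss multiplicative formula for the λ-Bernoulli numbers: for real `λ > 0`,
`λ ≠ 1` and integers `m ≥ 1`, `n ≥ 0`,
`m·B_n(λ) = ∑_{j=0}^{n} C(n,j)·B_j(λ^m)·m^j·∑_{a=0}^{m-1} λ^a·a^{n-j}` (with `0^0 = 1`). -/
theorem lambdaBernoulli_gauss_multiplication (lam : ℝ) (hpos : 0 < lam) (h1 : lam ≠ 1)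
    (m : ℕ) (hm : 1 ≤ m) (n : ℕ) :
    (m : ℂ) * lambdaBernoulli (lam : ℂ) n =
      ∑ j ∈ Finset.range (n + 1),
        (n.choose j : ℂ) * lambdaBernoulli ((lam : ℂ) ^ m) j * (m : ℂ) ^ j *
          ∑ a ∈ Finset.range m, (lam : ℂ) ^ a * (a : ℂ) ^ (n - j) := by
  have hpow : lam ^ m ≠ 1 := (pow_eq_one_iff_of_nonneg hpos.le (by omega)).not.2 h1
  have hlog : Complex.log ((lam : ℂ) ^ m) = m * Complex.log lam := by
    rw [← Complex.ofReal_pow, ← Complex.ofReal_log (pow_pos hpos m).le,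
      ← Complex.ofReal_log hpos.le, Real.log_pow]
    push_cast
    ring
  exact lambdaBernoulli_gauss_multiplication_of_log_pow (mod_cast h1) (mod_cast hpow) hlog n
end

section
/- Let λ ∈ ℂ with λ ≠ 0 and λ ≠ 1, and let k ≥ 1 and l ≥ 1 be integers. Then B_l(λ; k) − λ^{−k}·B_l(λ) = λ^{−k}·l·∑_{n=0}^{k−1} λ^n·n^{l−1} + λ^{−k}·(Log λ)·∑_{n=0}^{k−1} λ^n·n^l, with the convention 0^0 = 1 (the λ-analogue of the sums-of-powers formula). -/
open Finset PowerSeries Nat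

theorem PowerSeries.coeff_mk_div_factorial_mul_rescale_exp {K : Type*} [Field K] [CharZero K]
    (b : ℕ → K) (x : K) (n : ℕ) :
    coeff n (mk (fun k => b k / k !) * rescale x (exp K)) =
      (∑ k ∈ range (n + 1), (n.choose k : K) * b k * x ^ (n - k)) / n ! := by
  rw [coeff_mul, Nat.sum_antidiagonal_eq_sum_range_succ_mk,
    eq_div_iff (by simp [n.factorial_ne_zero]), sum_mul]
  refine sum_congr rfl fun k hk => ?_
  rw [Nat.cast_choose K (Nat.lt_succ_iff.mp (mem_range.mp hk))]
  simp only [coeff_mk, coeff_rescale, coeff_exp, one_div, map_inv₀, map_natCast]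
  field_simp

theorem lambdaBernoulli_recurrence_s4 (lam : ℂ) (h1 : lam ≠ 1) (n : ℕ) :
    lam * lambdaBernoulliPoly lam n 1 - lambdaBernoulli lam n =
      if n = 0 then Complex.log lam else if n = 1 then 1 else 0 := by
  have hne : lam - 1 ≠ 0 := sub_ne_zero.mpr h1
  simp only [lambdaBernoulliPoly, one_pow, mul_one]
  cases n with
  | zero =>
    simp only [zero_add, range_one, sum_singleton, choose_self, cast_one, one_mul, lambdaBernoulli,
      ↓reduceIte]
    field_simp
  | succ n =>
    rw [sum_range_succ, Nat.choose_self, Nat.cast_one, one_mul, lambdaBernoulli,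
      ← Fin.sum_univ_eq_sum_range (fun k => ((n + 1).choose k : ℂ) * lambdaBernoulli lam k)]
    simp only [Nat.add_eq_zero_iff, one_ne_zero, and_false, if_false, Nat.add_eq_right]
    field_simp
    ring

noncomputable def lambdaBernoulliEGF (lam : ℂ) : ℂ⟦X⟧ :=
  mk fun n => lambdaBernoulli lam n / n !

theorem lambdaBernoulliPoly_eq_factorial_mul_coeff (lam : ℂ) (n : ℕ) (x : ℂ) :
    lambdaBernoulliPoly lam n x = n ! * coeff n (lambdaBernoulliEGF lam * rescale x (exp ℂ)) := by
  rw [lambdaBernoulliEGF, coeff_mk_div_factorial_mul_rescale_exp, lambdaBernoulliPoly,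
    mul_div_cancel₀ _ (by simp [n.factorial_ne_zero])]

theorem lambdaBernoulliEGF_functional_equation (lam : ℂ) (h1 : lam ≠ 1) :
    (C lam * exp ℂ - 1) * lambdaBernoulliEGF lam = C (Complex.log lam) + X := by
  ext n
  have hcoeff : coeff n ((C lam * exp ℂ - 1) * lambdaBernoulliEGF lam) =
      (lam * lambdaBernoulliPoly lam n 1 - lambdaBernoulli lam n) / n ! := by
    rw [lambdaBernoulliPoly_eq_factorial_mul_coeff, rescale_one, RingHom.id_apply, sub_mul,
      one_mul, mul_assoc, mul_comm (exp ℂ), map_sub, coeff_C_mul]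
    have hfac : (n ! : ℂ) ≠ 0 := Nat.cast_ne_zero.mpr n.factorial_ne_zero
    simp only [lambdaBernoulliEGF, coeff_mk]
    field_simp
  rw [hcoeff, lambdaBernoulli_recurrence_s4 lam h1, map_add, coeff_C, coeff_X]
  rcases n with _ | _ | n <;> simp

theorem lambdaBernoulliPoly_add_one (lam : ℂ) (h1 : lam ≠ 1) (n : ℕ) (x : ℂ) :
    lam * lambdaBernoulliPoly lam n (x + 1) - lambdaBernoulliPoly lam n x =
      n * x ^ (n - 1) + Complex.log lam * x ^ n := by
  have hshift : C lam * (lambdaBernoulliEGF lam * rescale (x + 1) (exp ℂ)) -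
      lambdaBernoulliEGF lam * rescale x (exp ℂ) =
      (C (Complex.log lam) + X) * rescale x (exp ℂ) := by
    rw [← lambdaBernoulliEGF_functional_equation lam h1, add_comm x,
      ← exp_mul_exp_eq_exp_add, rescale_one, RingHom.id_apply]
    ring
  rw [lambdaBernoulliPoly_eq_factorial_mul_coeff, lambdaBernoulliPoly_eq_factorial_mul_coeff,
    mul_left_comm, ← mul_sub, ← coeff_C_mul, ← map_sub, hshift, add_mul, map_add, coeff_C_mul,
    coeff_rescale, coeff_exp]
  rcases n with _ | n
  · simp
  · rw [coeff_succ_X_mul, coeff_rescale, coeff_exp]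
    have hfac : (n ! : ℂ) ≠ 0 := Nat.cast_ne_zero.mpr n.factorial_ne_zero
    simp only [one_div, map_inv₀, map_natCast]
    rw [factorial_succ, cast_mul, add_tsub_cancel_right]
    field_simp
    ring

theorem lambdaBernoulliPoly_zero (lam : ℂ) (n : ℕ) :
    lambdaBernoulliPoly lam n 0 = lambdaBernoulli lam n := by
  rw [lambdaBernoulliPoly, sum_eq_single_of_mem n (self_mem_range_succ n)]
  · simp
  · intro k hk hkn
    rw [zero_pow (Nat.sub_ne_zero_of_lt (lt_of_le_of_ne (mem_range_succ_iff.mp hk) hkn)),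
      mul_zero]

theorem pow_mul_lambdaBernoulliPoly_natCast_sub (lam : ℂ) (h1 : lam ≠ 1) (l k : ℕ) :
    lam ^ k * lambdaBernoulliPoly lam l k - lambdaBernoulli lam l =
      ∑ n ∈ range k, lam ^ n * (l * (n : ℂ) ^ (l - 1) + Complex.log lam * (n : ℂ) ^ l) := by
  have htel := sum_range_sub (fun n => lam ^ n * lambdaBernoulliPoly lam l n) k
  rw [pow_zero, one_mul, Nat.cast_zero, lambdaBernoulliPoly_zero] at htel
  rw [← htel]
  refine sum_congr rfl fun n _ => ?_
  rw [← lambdaBernoulliPoly_add_one lam h1, Nat.cast_succ, pow_succ]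
  ring

theorem lambdaBernoulliPoly_sum_of_powers_general (lam : ℂ) (h0 : lam ≠ 0) (h1 : lam ≠ 1)
    (k l : ℕ) :
    lambdaBernoulliPoly lam l (k : ℂ) - (lam ^ k)⁻¹ * lambdaBernoulli lam l =
      (lam ^ k)⁻¹ * (l : ℂ) * (∑ n ∈ Finset.range k, lam ^ n * (n : ℂ) ^ (l - 1)) +
        (lam ^ k)⁻¹ * Complex.log lam * ∑ n ∈ Finset.range k, lam ^ n * (n : ℂ) ^ l := by
  have htel := pow_mul_lambdaBernoulliPoly_natCast_sub lam h1 l k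
  simp only [mul_add, sum_add_distrib, mul_left_comm _ (l : ℂ),
    mul_left_comm _ (Complex.log lam), ← mul_sum] at htel
  have hpow : lam ^ k ≠ 0 := pow_ne_zero k h0
  field_simp
  linear_combination htel

/-- the λ-analogue of the sums-of-powers formula: for `λ ∈ ℂ`, `λ ≠ 0`, `λ ≠ 1`
and integers `k ≥ 1`, `l ≥ 1`,
`B_l(λ; k) - λ^{-k}·B_l(λ)
  = λ^{-k}·l·∑_{n=0}^{k-1} λ^n·n^{l-1} + λ^{-k}·(Log λ)·∑_{n=0}^{k-1} λ^n·n^l`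
(with `0^0 = 1`). -/
theorem lambdaBernoulliPoly_sum_of_powers (lam : ℂ) (h0 : lam ≠ 0) (h1 : lam ≠ 1)
    (k l : ℕ) (hk : 1 ≤ k) (hl : 1 ≤ l) :
    lambdaBernoulliPoly lam l (k : ℂ) - (lam ^ k)⁻¹ * lambdaBernoulli lam l =
      (lam ^ k)⁻¹ * (l : ℂ) * (∑ n ∈ Finset.range k, lam ^ n * (n : ℂ) ^ (l - 1)) +
        (lam ^ k)⁻¹ * Complex.log lam * ∑ n ∈ Finset.range k, lam ^ n * (n : ℂ) ^ l :=
  lambdaBernoulliPoly_sum_of_powers_general lam h0 h1 k l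
end

section
/- Let λ ∈ ℂ with 0 < |λ| < 1, let x ∈ ℂ, and let k ≥ 1 be an integer. Then the series ∑_{n=0}^{∞} λ^n·(n + x)^k and ∑_{n=0}^{∞} λ^n·(n + x)^{k−1} converge absolutely and −B_k(λ; x)/k = (Log λ/k)·∑_{n=0}^{∞} λ^n·(n + x)^k + ∑_{n=0}^{∞} λ^n·(n + x)^{k−1}. -/
open Finset Asymptotics Filter

section LerchSum

variable {𝕜 : Type*} [RCLike 𝕜]

theorem isBigO_natCast_add_const (y : 𝕜) :
    (fun i : ℕ => (i : 𝕜) + y) =O[atTop] (fun i : ℕ => (i : 𝕜)) := by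
  refine (isBigO_refl _ _).add ?_
  have hone : (fun _ : ℕ => (1 : 𝕜)) =O[atTop] (fun i : ℕ => (i : 𝕜)) :=
    (isBigO_const_left_iff_pos_le_norm one_ne_zero).2
      ⟨1, one_pos, eventually_atTop.2 ⟨1, fun i hi => by simpa using hi⟩⟩
  simpa using hone.const_mul_left y

theorem summable_norm_geometric_mul_natCast_add_pow {r : 𝕜} (hr : ‖r‖ < 1) (m : ℕ) (y : 𝕜) :
    Summable fun i : ℕ => ‖r ^ i * ((i : 𝕜) + y) ^ m‖ := by
  refine summable_of_isBigO_nat (summable_norm_pow_mul_geometric_of_norm_lt_one m hr) ?_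
  refine IsBigO.norm_norm ?_
  simpa only [mul_comm] using (isBigO_refl (fun i : ℕ => r ^ i) atTop).mul
    ((isBigO_natCast_add_const y).pow m)

theorem summable_geometric_mul_natCast_add_pow {r : 𝕜} (hr : ‖r‖ < 1) (m : ℕ) (y : 𝕜) :
    Summable fun i : ℕ => r ^ i * ((i : 𝕜) + y) ^ m :=
  (summable_norm_geometric_mul_natCast_add_pow hr m y).of_norm

/-- The Lerch transcendent `Φ(r, -m, y)`. -/
noncomputable def lerchSum (r : 𝕜) (m : ℕ) (y : 𝕜) : 𝕜 :=
  ∑' i : ℕ, r ^ i * ((i : 𝕜) + y) ^ m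

variable {r : 𝕜}

theorem lerchSum_zero (hr : ‖r‖ < 1) (y : 𝕜) : lerchSum r 0 y = (1 - r)⁻¹ := by
  simpa [lerchSum] using tsum_geometric_of_norm_lt_one hr

theorem lerchSum_eq_pow_add_mul_lerchSum_add_one (hr : ‖r‖ < 1) (m : ℕ) (y : 𝕜) :
    lerchSum r m y = y ^ m + r * lerchSum r m (y + 1) := by
  rw [lerchSum, (summable_geometric_mul_natCast_add_pow hr m y).tsum_eq_zero_add, lerchSum,
    ← tsum_mul_left]
  congr 1
  · simp
  · exact tsum_congr fun i => by push_cast; ring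

theorem sum_choose_mul_lerchSum_mul_pow (hr : ‖r‖ < 1) (n : ℕ) (y z : 𝕜) :
    ∑ j ∈ range (n + 1), (n.choose j : 𝕜) * lerchSum r j y * z ^ (n - j)
      = lerchSum r n (y + z) := by
  have hbinom : ∀ i : ℕ, r ^ i * ((i : 𝕜) + (y + z)) ^ n
      = ∑ j ∈ range (n + 1), (n.choose j : 𝕜) * (r ^ i * ((i : 𝕜) + y) ^ j) * z ^ (n - j) := by
    intro i
    rw [← add_assoc, add_pow, mul_sum]
    exact sum_congr rfl fun j _ => by ring
  simp_rw [lerchSum, hbinom]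
  rw [Summable.tsum_finsetSum fun j _ =>
    ((summable_geometric_mul_natCast_add_pow hr j y).mul_left _).mul_right _]
  exact sum_congr rfl fun j _ => by rw [tsum_mul_right, tsum_mul_left]

theorem sum_choose_mul_natCast_mul_lerchSum_mul_pow (hr : ‖r‖ < 1) (n : ℕ) (y z : 𝕜) :
    ∑ j ∈ range (n + 1), (n.choose j : 𝕜) * ((j : 𝕜) * lerchSum r (j - 1) y) * z ^ (n - j)
      = (n : 𝕜) * lerchSum r (n - 1) (y + z) := by
  cases n with
  | zero => simp
  | succ n =>
    have hchoose : ∀ j ∈ range (n + 1),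
        ((n + 1).choose (j + 1) : 𝕜) * (((j + 1 : ℕ) : 𝕜) * lerchSum r (j + 1 - 1) y)
            * z ^ (n + 1 - (j + 1))
          = ((n + 1 : ℕ) : 𝕜) * ((n.choose j : 𝕜) * lerchSum r j y * z ^ (n - j)) := by
      intro j _
      have h : ((n + 1 : ℕ) : 𝕜) * n.choose j = (n + 1).choose (j + 1) * ((j + 1 : ℕ) : 𝕜) := by
        exact_mod_cast Nat.add_one_mul_choose_eq n j
      simp only [Nat.add_sub_cancel, Nat.add_sub_add_right]
      linear_combination lerchSum r j y * z ^ (n - j) * h.symm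
    rw [sum_range_succ', sum_congr rfl hchoose, ← mul_sum,
      sum_choose_mul_lerchSum_mul_pow hr]
    simp

end LerchSum

noncomputable def lambdaBernoulliSeries (lam : ℂ) (n : ℕ) (y : ℂ) : ℂ :=
  -Complex.log lam * lerchSum lam n y - n * lerchSum lam (n - 1) y

section LambdaBernoulliSeries

variable {lam : ℂ}

theorem sum_choose_mul_lambdaBernoulliSeries_mul_pow (hlam : ‖lam‖ < 1) (n : ℕ) (y z : ℂ) :
    ∑ j ∈ range (n + 1), (n.choose j : ℂ) * lambdaBernoulliSeries lam j y * z ^ (n - j)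
      = lambdaBernoulliSeries lam n (y + z) := by
  rw [lambdaBernoulliSeries, ← sum_choose_mul_lerchSum_mul_pow hlam,
    ← sum_choose_mul_natCast_mul_lerchSum_mul_pow hlam, mul_sum, ← sum_sub_distrib]
  exact sum_congr rfl fun j _ => by rw [lambdaBernoulliSeries]; ring

theorem mul_lambdaBernoulliSeries_add_one_sub (hlam : ‖lam‖ < 1) (n : ℕ) (y : ℂ) :
    lam * lambdaBernoulliSeries lam n (y + 1) - lambdaBernoulliSeries lam n y
      = Complex.log lam * y ^ n + n * y ^ (n - 1) := by
  have hn := lerchSum_eq_pow_add_mul_lerchSum_add_one hlam n y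
  have hn' := lerchSum_eq_pow_add_mul_lerchSum_add_one hlam (n - 1) y
  simp only [lambdaBernoulliSeries]
  linear_combination Complex.log lam * hn + (n : ℂ) * hn'

end LambdaBernoulliSeries

theorem eq_lambdaBernoulli_of_recurrence {lam : ℂ} (hlam : lam ≠ 1) {b : ℕ → ℂ}
    (h0 : b 0 = Complex.log lam / (lam - 1))
    (hrec : ∀ n, lam * ∑ k ∈ range (n + 2), ((n + 1).choose k : ℂ) * b k - b (n + 1)
      = if n = 0 then 1 else 0) :
    b = lambdaBernoulli lam := by
  have hlam' : lam - 1 ≠ 0 := sub_ne_zero.mpr hlam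
  funext n
  induction n using Nat.strong_induction_on with
  | _ n ih =>
    cases n with
    | zero => simpa [lambdaBernoulli] using h0
    | succ n =>
      have hsum : ∑ k ∈ range (n + 1), ((n + 1).choose k : ℂ) * b k
          = ∑ k ∈ range (n + 1), ((n + 1).choose k : ℂ) * lambdaBernoulli lam k :=
        sum_congr rfl fun k hk => by rw [ih k (mem_range.mp hk)]
      have h := hrec n
      rw [sum_range_succ, Nat.choose_self, Nat.cast_one, one_mul, hsum] at h
      rw [lambdaBernoulli, Fin.sum_univ_eq_sum_range
        (fun k => ((n + 1).choose k : ℂ) * lambdaBernoulli lam k), eq_div_iff hlam']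
      linear_combination h

theorem lambdaBernoulli_eq_lambdaBernoulliSeries {lam : ℂ} (hlam : ‖lam‖ < 1) (n : ℕ) :
    lambdaBernoulli lam n = lambdaBernoulliSeries lam n 0 := by
  have hlam1 : lam ≠ 1 := by rintro rfl; simp at hlam
  refine (congrFun (eq_lambdaBernoulli_of_recurrence (b := (lambdaBernoulliSeries lam · 0))
    hlam1 ?_ fun n => ?_) n).symm
  · have h1 : (1 : ℂ) - lam ≠ 0 := sub_ne_zero.mpr hlam1.symm
    rw [lambdaBernoulliSeries, lerchSum_zero hlam]
    field_simp
    ring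
  · have happell := sum_choose_mul_lambdaBernoulliSeries_mul_pow hlam (n + 1) 0 1
    simp only [one_pow, mul_one] at happell
    rw [happell, mul_lambdaBernoulliSeries_add_one_sub hlam]
    cases n <;> simp

theorem lambdaBernoulliPoly_eq_lambdaBernoulliSeries {lam : ℂ} (hlam : ‖lam‖ < 1) (n : ℕ)
    (x : ℂ) : lambdaBernoulliPoly lam n x = lambdaBernoulliSeries lam n x := by
  simpa [lambdaBernoulliPoly, lambdaBernoulli_eq_lambdaBernoulliSeries hlam] using
    sum_choose_mul_lambdaBernoulliSeries_mul_pow hlam n 0 x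

theorem lambdaBernoulliPoly_eq_tsum_general (lam : ℂ)
    (h1 : ‖lam‖ < 1) (x : ℂ) (k : ℕ) (hk : 1 ≤ k) :
    Summable (fun n : ℕ => ‖lam ^ n * ((n : ℂ) + x) ^ k‖) ∧
    Summable (fun n : ℕ => ‖lam ^ n * ((n : ℂ) + x) ^ (k - 1)‖) ∧
    -lambdaBernoulliPoly lam k x / (k : ℂ) =
      (Complex.log lam / (k : ℂ)) * (∑' n : ℕ, lam ^ n * ((n : ℂ) + x) ^ k) +
        ∑' n : ℕ, lam ^ n * ((n : ℂ) + x) ^ (k - 1) := by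
  refine ⟨summable_norm_geometric_mul_natCast_add_pow h1 k x,
    summable_norm_geometric_mul_natCast_add_pow h1 (k - 1) x, ?_⟩
  have hk0 : (k : ℂ) ≠ 0 := Nat.cast_ne_zero.mpr (by omega)
  rw [lambdaBernoulliPoly_eq_lambdaBernoulliSeries h1, lambdaBernoulliSeries]
  simp only [lerchSum]
  field_simp
  ring

/-- for `λ ∈ ℂ` with `0 < |λ| < 1`, `x ∈ ℂ` and an integer `k ≥ 1`, the series
`∑_{n≥0} λ^n·(n + x)^k` and `∑_{n≥0} λ^n·(n + x)^{k-1}` converge absolutely and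
`-B_k(λ; x)/k = (Log λ/k)·∑_{n≥0} λ^n·(n + x)^k + ∑_{n≥0} λ^n·(n + x)^{k-1}`. -/
theorem lambdaBernoulliPoly_eq_tsum (lam : ℂ) (h0 : 0 < ‖lam‖)
    (h1 : ‖lam‖ < 1) (x : ℂ) (k : ℕ) (hk : 1 ≤ k) :
    Summable (fun n : ℕ => ‖lam ^ n * ((n : ℂ) + x) ^ k‖) ∧
    Summable (fun n : ℕ => ‖lam ^ n * ((n : ℂ) + x) ^ (k - 1)‖) ∧
    -lambdaBernoulliPoly lam k x / (k : ℂ) =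
      (Complex.log lam / (k : ℂ)) * (∑' n : ℕ, lam ^ n * ((n : ℂ) + x) ^ k) +
        ∑' n : ℕ, lam ^ n * ((n : ℂ) + x) ^ (k - 1) :=
  lambdaBernoulliPoly_eq_tsum_general lam h1 x k hk
end

section
/- Let d ≥ 2 be an integer, χ a Dirichlet character modulo d, λ a real number with 0 < λ < 1, and k ≥ 1 an integer. Then the series below converge absolutely and ∑_{m=1}^{∞} χ(m)·λ^m·m^{k−1} + (log λ/k)·∑_{m=1}^{∞} χ(m)·λ^m·m^k = −B_{k,χ}(λ)/k. -/
/-- The generalized λ-Bernoulli numbers `B_{n,χ}(λ)` attached to a Dirichlet character `χ`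
modulo `d`, defined by the recurrence
`λ^d·∑_{k=0}^{n} C(n,k)·d^{n-k}·B_{k,χ}(λ) - B_{n,χ}(λ)
  = (log λ)·∑_{j=0}^{d-1} χ(j)·λ^j·j^n + n·∑_{j=0}^{d-1} χ(j)·λ^j·j^{n-1}`
(with `0^0 = 1` and `0·j^{-1} = 0`), which encodes the generating function
`∑_{j=0}^{d-1} χ(j)·λ^j·e^{jt}·(log λ + t)/(λ^d e^{dt} - 1) = ∑_{n≥0} B_{n,χ}(λ)·t^n/n!`. -/
noncomputable def genLambdaBernoulli {d : ℕ} (χ : DirichletCharacter ℂ d) (lam : ℝ) : ℕ → ℂ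
  | n =>
    (((Real.log lam : ℂ) * ∑ j ∈ Finset.range d, χ (j : ZMod d) * (lam : ℂ) ^ j * (j : ℂ) ^ n +
          (n : ℂ) * ∑ j ∈ Finset.range d, χ (j : ZMod d) * (lam : ℂ) ^ j * (j : ℂ) ^ (n - 1)) -
        (lam : ℂ) ^ d *
          ∑ k : Fin n, (n.choose (k : ℕ) : ℂ) * (d : ℂ) ^ (n - (k : ℕ)) *
            genLambdaBernoulli χ lam k) /
      ((lam : ℂ) ^ d - 1)

/-!
Write `Sₙ = ∑_{m ≥ 0} χ(m) λ^m m^n`. Since `χ` is `d`-periodic, shifting the summation index by `d`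
gives `λ^d ∑_k C(n,k) d^{n-k} S_k - S_n = -∑_{m<d} χ(m) λ^m m^n`, i.e. on exponential generating
functions `(λ^d e^{dt} - 1)·S(t) = -∑_{m<d} χ(m) λ^m e^{mt}`. Multiplying by `log λ + t` shows that
`-(log λ·Sₙ + n·S_{n-1})` satisfies the recurrence defining `B_{n,χ}(λ)`, whose solution is unique
because `λ^d ≠ 1`. Finally `χ(0) = 0`, so `Sₙ` is the series of the statement.
-/

open Finset

/-- For `X(t) = ∑ xₙ tⁿ/n!`, these are the coefficients of `(c·e^{Dt} - 1)·X(t)`. -/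
def binomialTwist (c D : ℂ) (x : ℕ → ℂ) (n : ℕ) : ℂ :=
  c * ∑ k ∈ range (n + 1), (n.choose k : ℂ) * D ^ (n - k) * x k - x n

section binomialTwist

variable {c D : ℂ}

lemma binomialTwist_eq_sum_range_add (x : ℕ → ℂ) (n : ℕ) :
    binomialTwist c D x n =
      c * ∑ k ∈ range n, (n.choose k : ℂ) * D ^ (n - k) * x k + (c - 1) * x n := by
  simp only [binomialTwist, sum_range_succ, Nat.choose_self, Nat.sub_self, Nat.cast_one, pow_zero]
  ring

lemma binomialTwist_mul_add_mul (a b : ℂ) (x y : ℕ → ℂ) (n : ℕ) :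
    binomialTwist c D (fun n => a * x n + b * y n) n =
      a * binomialTwist c D x n + b * binomialTwist c D y n := by
  have hsum : ∑ k ∈ range (n + 1), (n.choose k : ℂ) * D ^ (n - k) * (a * x k + b * y k) =
      a * ∑ k ∈ range (n + 1), (n.choose k : ℂ) * D ^ (n - k) * x k +
        b * ∑ k ∈ range (n + 1), (n.choose k : ℂ) * D ^ (n - k) * y k := by
    rw [mul_sum, mul_sum, ← sum_add_distrib]
    exact sum_congr rfl fun _ _ => by ring
  simp only [binomialTwist, hsum]
  ring

/-- On generating functions, `n ↦ n·x (n - 1)` is `t·X(t)`, and multiplication by `t` commutes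
with multiplication by `c·e^{Dt} - 1`. -/
lemma binomialTwist_natCast_mul_pred (x : ℕ → ℂ) (n : ℕ) :
    binomialTwist c D (fun n => n * x (n - 1)) n = n * binomialTwist c D x (n - 1) := by
  rcases n with _ | m
  · simp [binomialTwist]
  have hsum : ∑ k ∈ range (m + 1 + 1),
        ((m + 1).choose k : ℂ) * D ^ (m + 1 - k) * (k * x (k - 1)) =
      (m + 1) * ∑ k ∈ range (m + 1), (m.choose k : ℂ) * D ^ (m - k) * x k := by
    rw [sum_range_succ', mul_sum]
    simp only [Nat.cast_zero, zero_mul, mul_zero, add_zero, Nat.add_sub_cancel,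
      Nat.add_sub_add_right]
    refine sum_congr rfl fun k _ => ?_
    have h := congrArg (Nat.cast : ℕ → ℂ) (Nat.add_one_mul_choose_eq m k)
    push_cast at h ⊢
    linear_combination (D ^ (m - k) * x k) * h.symm
  simp only [binomialTwist, hsum, Nat.add_sub_cancel]
  push_cast
  ring

lemma binomialTwist_injective (hc : c ≠ 1) : Function.Injective (binomialTwist c D) := by
  intro x y hxy
  funext n
  induction n using Nat.strong_induction_on with
  | _ n ih =>
    have h := congrFun hxy n
    rw [binomialTwist_eq_sum_range_add, binomialTwist_eq_sum_range_add,
      sum_congr rfl fun k hk => by rw [ih k (mem_range.mp hk)]] at h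
    exact mul_left_cancel₀ (sub_ne_zero.mpr hc) (add_left_cancel h)

end binomialTwist

noncomputable def twistedPowerTerm {d : ℕ} (χ : DirichletCharacter ℂ d) (z : ℂ) (n m : ℕ) : ℂ :=
  χ m * z ^ m * (m : ℂ) ^ n

noncomputable def twistedPowerSum {d : ℕ} (χ : DirichletCharacter ℂ d) (z : ℂ) (n : ℕ) : ℂ :=
  ∑' m, twistedPowerTerm χ z n m

section twistedPowerSum

variable {d : ℕ} (χ : DirichletCharacter ℂ d) {z : ℂ}

lemma summable_norm_twistedPowerTerm (hz : ‖z‖ < 1) (n : ℕ) :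
    Summable fun m => ‖twistedPowerTerm χ z n m‖ := by
  refine (summable_norm_pow_mul_geometric_of_norm_lt_one n hz).of_nonneg_of_le
    (fun _ => norm_nonneg _) fun m => ?_
  simp only [twistedPowerTerm, norm_mul]
  calc ‖χ m‖ * ‖z ^ m‖ * ‖(m : ℂ) ^ n‖ ≤ 1 * ‖z ^ m‖ * ‖(m : ℂ) ^ n‖ := by
        gcongr; exact χ.norm_le_one _
    _ = ‖(m : ℂ) ^ n‖ * ‖z ^ m‖ := by ring

lemma binomialTwist_twistedPowerSum (hz : ‖z‖ < 1) (n : ℕ) :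
    binomialTwist (z ^ d) d (twistedPowerSum χ z) n =
      -∑ m ∈ range d, twistedPowerTerm χ z n m := by
  have hsummable k := (summable_norm_twistedPowerTerm χ hz k).of_norm
  have hshift :
      z ^ d * ∑ k ∈ range (n + 1), (n.choose k : ℂ) * d ^ (n - k) * twistedPowerSum χ z k =
        ∑' m, twistedPowerTerm χ z n (m + d) := by
    simp only [twistedPowerSum, ← tsum_mul_left]
    rw [← Summable.tsum_finsetSum fun k _ => (hsummable k).mul_left _, ← tsum_mul_left]
    refine tsum_congr fun m => ?_
    have hχ : χ ((m + d : ℕ) : ZMod d) = χ m := by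
      rw [Nat.cast_add, ZMod.natCast_self, add_zero]
    rw [twistedPowerTerm, hχ, Nat.cast_add, add_pow, mul_sum, mul_sum]
    exact sum_congr rfl fun k _ => by rw [twistedPowerTerm]; ring
  rw [binomialTwist, hshift, twistedPowerSum, ← (hsummable n).sum_add_tsum_nat_add d]
  ring

lemma twistedPowerSum_eq_tsum_succ (hd : 1 < d) (n : ℕ) :
    twistedPowerSum χ z n = ∑' m, twistedPowerTerm χ z n (m + 1) := by
  have : Fact (1 < d) := ⟨hd⟩
  refine (Nat.succ_injective.tsum_eq fun m hm => ?_).symm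
  obtain ⟨k, rfl⟩ := Nat.exists_eq_succ_of_ne_zero (n := m) fun h => by
    simp [h, twistedPowerTerm, χ.map_zero] at hm
  exact ⟨k, rfl⟩

end twistedPowerSum

lemma binomialTwist_genLambdaBernoulli {d : ℕ} (χ : DirichletCharacter ℂ d) {lam : ℝ}
    (hlam : (lam : ℂ) ^ d ≠ 1) (n : ℕ) :
    binomialTwist ((lam : ℂ) ^ d) d (genLambdaBernoulli χ lam) n =
      Real.log lam * ∑ m ∈ range d, twistedPowerTerm χ lam n m +
        n * ∑ m ∈ range d, twistedPowerTerm χ lam (n - 1) m := by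
  rw [binomialTwist_eq_sum_range_add, genLambdaBernoulli.eq_1 χ lam n,
    Fin.sum_univ_eq_sum_range (fun k => (n.choose k : ℂ) * d ^ (n - k) * genLambdaBernoulli χ lam k)]
  field_simp [sub_ne_zero.mpr hlam]
  simp only [twistedPowerTerm]
  ring

lemma genLambdaBernoulli_eq_twistedPowerSum {d : ℕ} (hd : d ≠ 0) (χ : DirichletCharacter ℂ d)
    {lam : ℝ} (hlam : |lam| < 1) (n : ℕ) :
    genLambdaBernoulli χ lam n =
      -(Real.log lam * twistedPowerSum χ lam n + n * twistedPowerSum χ lam (n - 1)) := by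
  have hz : ‖(lam : ℂ)‖ < 1 := by rwa [Complex.norm_real, Real.norm_eq_abs]
  have hc : (lam : ℂ) ^ d ≠ 1 := fun h => by
    have h' := pow_lt_one₀ (norm_nonneg _) hz hd
    rw [← norm_pow, h, norm_one] at h'
    exact h'.false
  suffices genLambdaBernoulli χ lam = fun n => (-Real.log lam : ℂ) * twistedPowerSum χ lam n +
      (-1) * (n * twistedPowerSum χ lam (n - 1)) by
    rw [this]; ring
  refine binomialTwist_injective (D := d) hc (funext fun n => ?_)
  rw [binomialTwist_genLambdaBernoulli χ hc, binomialTwist_mul_add_mul,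
    binomialTwist_natCast_mul_pred, binomialTwist_twistedPowerSum χ hz,
    binomialTwist_twistedPowerSum χ hz]
  ring

/-- for an integer `d ≥ 2`, a Dirichlet character `χ` mod `d`, real `0 < λ < 1`
and an integer `k ≥ 1`, the series `∑_{m≥1} χ(m)·λ^m·m^{k-1}` and `∑_{m≥1} χ(m)·λ^m·m^k`
converge absolutely and
`∑_{m≥1} χ(m)·λ^m·m^{k-1} + (log λ/k)·∑_{m≥1} χ(m)·λ^m·m^k = -B_{k,χ}(λ)/k`. -/
theorem genLambdaBernoulli_eq_tsum (d : ℕ) (hd : 2 ≤ d) (χ : DirichletCharacter ℂ d)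
    (lam : ℝ) (h0 : 0 < lam) (h1 : lam < 1) (k : ℕ) (hk : 1 ≤ k) :
    Summable (fun m : ℕ => ‖χ ((m + 1 : ℕ) : ZMod d) * (lam : ℂ) ^ (m + 1) * ((m + 1 : ℕ) : ℂ) ^ (k - 1)‖) ∧
    Summable (fun m : ℕ => ‖χ ((m + 1 : ℕ) : ZMod d) * (lam : ℂ) ^ (m + 1) * ((m + 1 : ℕ) : ℂ) ^ k‖) ∧
    (∑' m : ℕ, χ ((m + 1 : ℕ) : ZMod d) * (lam : ℂ) ^ (m + 1) * ((m + 1 : ℕ) : ℂ) ^ (k - 1)) +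
        ((Real.log lam : ℂ) / (k : ℂ)) *
          ∑' m : ℕ, χ ((m + 1 : ℕ) : ZMod d) * (lam : ℂ) ^ (m + 1) * ((m + 1 : ℕ) : ℂ) ^ k =
      -genLambdaBernoulli χ lam k / (k : ℂ) := by
  have hlam : |lam| < 1 := abs_lt.mpr ⟨by linarith, h1⟩
  have hz : ‖(lam : ℂ)‖ < 1 := by rwa [Complex.norm_real, Real.norm_eq_abs]
  have hsummable (n : ℕ) := (summable_nat_add_iff 1).mpr (summable_norm_twistedPowerTerm χ hz n)
  refine ⟨hsummable (k - 1), hsummable k, ?_⟩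
  change ∑' m, twistedPowerTerm χ lam (k - 1) (m + 1) +
    _ * ∑' m, twistedPowerTerm χ lam k (m + 1) = _
  rw [← twistedPowerSum_eq_tsum_succ χ hd, ← twistedPowerSum_eq_tsum_succ χ hd,
    genLambdaBernoulli_eq_twistedPowerSum (by omega) χ hlam]
  have hk0 : (k : ℂ) ≠ 0 := Nat.cast_ne_zero.mpr (by omega)
  field_simp
  ring
end

section
/- Let d ≥ 1 be an integer, χ a Dirichlet character modulo d, λ a real number with 0 < λ < 1, and s ∈ ℂ with s ≠ 1. Then L_λ(s, χ) = d^{−s}·∑_{a=1}^{d} λ^a·χ(a)·ζ_{λ^d}(s, a/d), where d^{−s} = exp(−s·log d). -/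
/-- The Hurwitz-type λ-zeta function, for real `0 < λ < 1` and real `x > 0`:
`ζ_λ(s, x) = (log λ/(1 - s))·∑_{n≥0} λ^n·(n + x)^{1-s} + ∑_{n≥0} λ^n·(n + x)^{-s}`,
complex powers of the positive real `n + x` being taken via the real logarithm. -/
noncomputable def hurwitzLambdaZeta (lam x : ℝ) (s : ℂ) : ℂ :=
  ((Real.log lam : ℂ) / (1 - s)) *
      (∑' n : ℕ, (lam : ℂ) ^ n * ((((n : ℝ) + x : ℝ)) : ℂ) ^ (1 - s)) +
    ∑' n : ℕ, (lam : ℂ) ^ n * ((((n : ℝ) + x : ℝ)) : ℂ) ^ (-s)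

/-- The Dirichlet-type λ-L-function, for real `0 < λ < 1` and a Dirichlet character `χ` mod `d`:
`L_λ(s, χ) = ∑_{m≥1} χ(m)·λ^m·m^{-s} - (log λ/(s - 1))·∑_{m≥1} χ(m)·λ^m·m^{1-s}`,
complex powers of the positive integer `m` being taken via the real logarithm. -/
noncomputable def lambdaLFunction {d : ℕ} (χ : DirichletCharacter ℂ d) (lam : ℝ) (s : ℂ) : ℂ :=
  (∑' m : ℕ, χ ((m + 1 : ℕ) : ZMod d) * (lam : ℂ) ^ (m + 1) * ((m + 1 : ℕ) : ℂ) ^ (-s)) -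
    ((Real.log lam : ℂ) / (s - 1)) *
      ∑' m : ℕ, χ ((m + 1 : ℕ) : ZMod d) * (lam : ℂ) ^ (m + 1) * ((m + 1 : ℕ) : ℂ) ^ (1 - s)

/-!
Writing `m = n d + a` with `1 ≤ a ≤ d`, one has `χ(m) = χ(a)`, `λ^m = λ^a (λ^d)^n` and
`m^w = d^w (n + a/d)^w`, so each of the two series defining `L_λ(s, χ)` splits into `d`
Hurwitz-type series in `λ^d`. The logarithmic prefactors then match because
`log (λ^d) = d log λ` and `d^{1-s} = d · d^{-s}`.
-/

open Finset

theorem summable_norm_pow_mul_natCast_cpow {z : ℂ} (hz : ‖z‖ < 1) (w : ℂ) :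
    Summable fun m : ℕ => ‖z ^ m * (m : ℂ) ^ w‖ := by
  set k := ⌈w.re⌉₊
  refine .of_norm_bounded_eventually_nat
    (summable_pow_mul_geometric_of_norm_lt_one k (r := ‖z‖) (by rwa [norm_norm])) ?_
  filter_upwards [Filter.eventually_ge_atTop 1] with m hm
  rw [norm_norm, norm_mul, norm_pow, Complex.norm_natCast_cpow_of_pos hm, mul_comm]
  gcongr
  rw [← Real.rpow_natCast]
  exact Real.rpow_le_rpow_of_exponent_le (by exact_mod_cast hm) (Nat.le_ceil w.re)

theorem DirichletCharacter.summable_mul_pow_mul_natCast_cpow {d : ℕ} (χ : DirichletCharacter ℂ d)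
    {z : ℂ} (hz : ‖z‖ < 1) (w : ℂ) :
    Summable fun m : ℕ => χ m * z ^ m * (m : ℂ) ^ w :=
  .of_norm_bounded (summable_norm_pow_mul_natCast_cpow hz w) fun m => by
    rw [mul_assoc, norm_mul]
    exact mul_le_of_le_one_left (norm_nonneg _) (χ.norm_le_one m)

section Reindex

variable {E : Type*} [AddCommGroup E] [UniformSpace E] [IsUniformAddGroup E] [CompleteSpace E]
  [T0Space E]

theorem tsum_eq_sum_range_tsum_mul_add {f : ℕ → E} (hf : Summable f) {d : ℕ} (hd : d ≠ 0) :
    ∑' m, f m = ∑ b ∈ range d, ∑' n, f (n * d + b) := by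
  have : NeZero d := ⟨hd⟩
  let e : Fin d × ℕ ≃ ℕ := (Equiv.prodComm _ _).trans (Nat.divModEquiv d).symm
  rw [← e.tsum_eq]
  refine (hf.comp_injective e.injective).tsum_prod.trans ?_
  rw [tsum_fintype, ← Fin.sum_univ_eq_sum_range (fun b => ∑' n, f (n * d + b))]
  rfl

theorem tsum_succ_eq_sum_Icc_tsum_mul_add {f : ℕ → E} (hf : Summable f) {d : ℕ} (hd : d ≠ 0) :
    ∑' m, f (m + 1) = ∑ a ∈ Icc 1 d, ∑' n, f (n * d + a) := by
  rw [tsum_eq_sum_range_tsum_mul_add ((summable_nat_add_iff 1).mpr hf) hd,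
    ← Ico_add_one_right_eq_Icc, sum_Ico_eq_sum_range, Nat.add_sub_cancel]
  simp only [add_comm 1, add_assoc]

end Reindex

theorem natCast_mul_add_cpow {d : ℕ} (hd : d ≠ 0) (n a : ℕ) (w : ℂ) :
    ((n * d + a : ℕ) : ℂ) ^ w = (d : ℂ) ^ w * (((n : ℝ) + a / d : ℝ) : ℂ) ^ w := by
  have hd' : (0 : ℝ) < d := by positivity
  have : ((n * d + a : ℕ) : ℂ) = ((d : ℝ) * ((n : ℝ) + a / d) : ℝ) := by
    push_cast
    field_simp
  rw [this, Complex.ofReal_mul, Complex.mul_cpow_ofReal_nonneg hd'.le (by positivity),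
    Complex.ofReal_natCast]

noncomputable def lambdaDirichletSeries {d : ℕ} (χ : DirichletCharacter ℂ d) (lam : ℝ) (w : ℂ) : ℂ :=
  ∑' m : ℕ, χ ((m + 1 : ℕ) : ZMod d) * (lam : ℂ) ^ (m + 1) * ((m + 1 : ℕ) : ℂ) ^ w

noncomputable def hurwitzLambdaSeries (lam x : ℝ) (w : ℂ) : ℂ :=
  ∑' n : ℕ, (lam : ℂ) ^ n * ((((n : ℝ) + x : ℝ)) : ℂ) ^ w

theorem lambdaLFunction_eq_lambdaDirichletSeries {d : ℕ} (χ : DirichletCharacter ℂ d) (lam : ℝ)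
    (s : ℂ) : lambdaLFunction χ lam s = lambdaDirichletSeries χ lam (-s) -
      ((Real.log lam : ℂ) / (s - 1)) * lambdaDirichletSeries χ lam (1 - s) :=
  rfl

theorem hurwitzLambdaZeta_eq_hurwitzLambdaSeries (lam x : ℝ) (s : ℂ) :
    hurwitzLambdaZeta lam x s =
      ((Real.log lam : ℂ) / (1 - s)) * hurwitzLambdaSeries lam x (1 - s) +
        hurwitzLambdaSeries lam x (-s) :=
  rfl

theorem lambdaDirichletSeries_eq_sum_hurwitzLambdaSeries {d : ℕ} (hd : d ≠ 0)
    (χ : DirichletCharacter ℂ d) {lam : ℝ} (hlam : |lam| < 1) (w : ℂ) :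
    lambdaDirichletSeries χ lam w = (d : ℂ) ^ w *
      ∑ a ∈ Icc 1 d, (lam : ℂ) ^ a * χ a * hurwitzLambdaSeries (lam ^ d) (a / d) w := by
  have hsum := χ.summable_mul_pow_mul_natCast_cpow (z := (lam : ℂ)) (by rwa [Complex.norm_real]) w
  rw [lambdaDirichletSeries, tsum_succ_eq_sum_Icc_tsum_mul_add hsum hd, mul_sum]
  refine sum_congr rfl fun a _ => ?_
  rw [hurwitzLambdaSeries, ← mul_assoc, ← tsum_mul_left]
  refine tsum_congr fun n => ?_
  have hχ : ((n * d + a : ℕ) : ZMod d) = a := by simp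
  rw [hχ, natCast_mul_add_cpow hd, pow_add, mul_comm n d, pow_mul]
  push_cast
  ring

theorem lambdaLFunction_eq_sum_hurwitzLambdaZeta_general (d : ℕ) (hd : 1 ≤ d)
    (χ : DirichletCharacter ℂ d) (lam : ℝ) (h0 : 0 < lam) (h1 : lam < 1)
    (s : ℂ) :
    lambdaLFunction χ lam s =
      (d : ℂ) ^ (-s) *
        ∑ a ∈ Finset.Icc 1 d,
          (lam : ℂ) ^ a * χ ((a : ℕ) : ZMod d) * hurwitzLambdaZeta (lam ^ d) ((a : ℝ) / d) s := by
  have hd0 : d ≠ 0 := by omega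
  have hlam : |lam| < 1 := abs_lt.mpr ⟨by linarith, h1⟩
  have hcpow : (d : ℂ) ^ (1 - s) = d * (d : ℂ) ^ (-s) := by
    rw [sub_eq_add_neg, Complex.cpow_add _ _ (by exact_mod_cast hd0), Complex.cpow_one]
  have hlog : (Real.log (lam ^ d) : ℂ) / (1 - s) = d * ((Real.log lam : ℂ) / (1 - s)) := by
    rw [Real.log_pow]; push_cast; ring
  have hlog' : (Real.log lam : ℂ) / (s - 1) = -((Real.log lam : ℂ) / (1 - s)) := by
    rw [← neg_sub, div_neg]
  simp only [lambdaLFunction_eq_lambdaDirichletSeries, hurwitzLambdaZeta_eq_hurwitzLambdaSeries,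
    lambdaDirichletSeries_eq_sum_hurwitzLambdaSeries hd0 χ hlam, hcpow, hlog, hlog', mul_sum,
    ← sum_sub_distrib]
  refine sum_congr rfl fun a _ => ?_
  ring

/-- for an integer `d ≥ 1`, a Dirichlet character `χ` mod `d`, real `0 < λ < 1`
and `s ∈ ℂ`, `s ≠ 1`:
`L_λ(s, χ) = d^{-s}·∑_{a=1}^{d} λ^a·χ(a)·ζ_{λ^d}(s, a/d)`, where `d^{-s} = exp(-s·log d)`. -/
theorem lambdaLFunction_eq_sum_hurwitzLambdaZeta (d : ℕ) (hd : 1 ≤ d)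
    (χ : DirichletCharacter ℂ d) (lam : ℝ) (h0 : 0 < lam) (h1 : lam < 1)
    (s : ℂ) (hs : s ≠ 1) :
    lambdaLFunction χ lam s =
      (d : ℂ) ^ (-s) *
        ∑ a ∈ Finset.Icc 1 d,
          (lam : ℂ) ^ a * χ ((a : ℕ) : ZMod d) * hurwitzLambdaZeta (lam ^ d) ((a : ℝ) / d) s :=
  lambdaLFunction_eq_sum_hurwitzLambdaZeta_general d hd χ lam h0 h1 s
end

section
/- Let λ ∈ ℂ with λ ≠ 1 and 0 < |Log λ| < 2π (Log the principal branch), let x ∈ ℂ, and let r ≥ 1 and n ≥ 0 be integers. Then the series ∑_{l=0}^{∞} B_{n+l}^{(r)}(x)·(Log λ)^l/l! converges absolutely and B_n^{(r)}(λ; x) = e^{−x·Log λ}·∑_{l=0}^{∞} B_{n+l}^{(r)}(x)·(Log λ)^l/l! (here B_m^{(r)}(x) are the ordinary Bernoulli polynomials of order r). -/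
/-!
The function `G(z) = e^{xz} (z / (e^z - 1))^r` is holomorphic on `‖z‖ < 2π`. Taking Taylor series
at `0`, which is multiplicative on analytic functions, turns the defining identities into
statements about `G`: the Taylor coefficients of `G` at `0` are `B_m^{(r)}(x) / m!`, and, since
`λ e^t - 1 = e^{Log λ + t} - 1`, those of `t ↦ e^{-x Log λ} G(Log λ + t)` are
`B_m^{(r)}(λ; x) / m!`. Hence `B_n^{(r)}(λ; x) = e^{-x Log λ} G^{(n)}(Log λ)`, and the Taylor
series of `G^{(n)}` about `0` converges at `Log λ` because `‖Log λ‖ < 2π`.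
-/

open Filter Metric PowerSeries
open scoped Topology Nat Real Complex

section TaylorSeries

variable {𝕜 : Type*} [NontriviallyNormedField 𝕜]

noncomputable def taylorSeriesAtZero (f : 𝕜 → 𝕜) : PowerSeries 𝕜 :=
  mk fun m => iteratedDeriv m f 0 / m !

@[simp]
theorem coeff_taylorSeriesAtZero (f : 𝕜 → 𝕜) (m : ℕ) :
    coeff m (taylorSeriesAtZero f) = iteratedDeriv m f 0 / m ! :=
  coeff_mk _ _

theorem taylorSeriesAtZero_congr {f g : 𝕜 → 𝕜} (h : f =ᶠ[𝓝 0] g) :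
    taylorSeriesAtZero f = taylorSeriesAtZero g := by
  ext m
  simp only [coeff_taylorSeriesAtZero, (h.iteratedDeriv m).eq_of_nhds]

theorem taylorSeriesAtZero_const (a : 𝕜) : taylorSeriesAtZero (fun _ => a) = C a := by
  ext m
  rcases eq_or_ne m 0 with rfl | hm <;> simp [iteratedDeriv_const, coeff_C, *]

theorem taylorSeriesAtZero_id : taylorSeriesAtZero (fun z : 𝕜 => z) = X := by
  ext m
  rcases eq_or_ne m 1 with rfl | hm <;> simp [iteratedDeriv_fun_id_zero, coeff_X, *]

variable [CompleteSpace 𝕜] {f g : 𝕜 → 𝕜}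

theorem taylorSeriesAtZero_add (hf : AnalyticAt 𝕜 f 0) (hg : AnalyticAt 𝕜 g 0) :
    taylorSeriesAtZero (fun z => f z + g z) = taylorSeriesAtZero f + taylorSeriesAtZero g := by
  ext m
  simp [iteratedDeriv_fun_add hf.contDiffAt hg.contDiffAt, add_div]

theorem taylorSeriesAtZero_sub (hf : AnalyticAt 𝕜 f 0) (hg : AnalyticAt 𝕜 g 0) :
    taylorSeriesAtZero (fun z => f z - g z) = taylorSeriesAtZero f - taylorSeriesAtZero g := by
  ext m
  simp [iteratedDeriv_fun_sub hf.contDiffAt hg.contDiffAt, sub_div]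

variable [CharZero 𝕜]

theorem taylorSeriesAtZero_mul (hf : AnalyticAt 𝕜 f 0) (hg : AnalyticAt 𝕜 g 0) :
    taylorSeriesAtZero (fun z => f z * g z) = taylorSeriesAtZero f * taylorSeriesAtZero g := by
  ext m
  simp only [coeff_taylorSeriesAtZero, iteratedDeriv_fun_mul hf.contDiffAt hg.contDiffAt,
    Finset.sum_div, coeff_mul, Finset.Nat.sum_antidiagonal_eq_sum_range_succ_mk]
  refine Finset.sum_congr rfl fun i hi => ?_
  rw [Nat.cast_choose 𝕜 (Finset.mem_range_succ_iff.mp hi)]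
  field_simp [Nat.factorial_ne_zero]

theorem taylorSeriesAtZero_pow (hf : AnalyticAt 𝕜 f 0) (r : ℕ) :
    taylorSeriesAtZero (fun z => f z ^ r) = taylorSeriesAtZero f ^ r := by
  induction r with
  | zero => simpa using taylorSeriesAtZero_const (1 : 𝕜)
  | succ r ih =>
    simp only [pow_succ]
    rw [← ih]
    exact taylorSeriesAtZero_mul (f := fun z => f z ^ r) (hf.pow r) hf

end TaylorSeries

theorem taylorSeriesAtZero_cexp_const_mul (a : ℂ) :
    taylorSeriesAtZero (fun z => cexp (a * z)) = mk fun m => a ^ m / m ! := by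
  ext m
  simp [iteratedDeriv_cexp_const_mul]

theorem taylorSeriesAtZero_cexp : taylorSeriesAtZero cexp = exp ℂ := by
  ext m
  simpa [coeff_exp] using congr(coeff m $(taylorSeriesAtZero_cexp_const_mul 1))

theorem PowerSeries.C_mul_exp_sub_one_ne_zero {K : Type*} [Field K] [CharZero K] {μ : K}
    (hμ : μ ≠ 0) : C μ * exp K - 1 ≠ 0 := by
  intro h
  simpa [coeff_exp, coeff_one, hμ] using congr(coeff 1 $h)

theorem Complex.exp_ne_one_of_norm_lt {z : ℂ} (hz₀ : z ≠ 0) (hz : ‖z‖ < 2 * π) : cexp z ≠ 1 := by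
  rw [Ne, Complex.exp_eq_one_iff]
  rintro ⟨k, rfl⟩
  have hk : (1 : ℝ) ≤ |(k : ℝ)| := by
    rw [← Int.cast_abs]
    exact_mod_cast Int.one_le_abs (by rintro rfl; simp at hz₀)
  rw [norm_mul, Complex.norm_intCast] at hz
  simp [abs_of_pos Real.pi_pos] at hz
  nlinarith [Real.pi_pos]

theorem dslope_cexp_ne_zero {z : ℂ} (hz : ‖z‖ < 2 * π) : dslope cexp 0 z ≠ 0 := by
  rcases eq_or_ne z 0 with rfl | hz₀
  · simp [dslope_same]
  · rw [dslope_of_ne _ hz₀, slope_def_field, sub_zero, Complex.exp_zero]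
    exact div_ne_zero (sub_ne_zero.mpr (Complex.exp_ne_one_of_norm_lt hz₀ hz)) hz₀

theorem differentiable_dslope_cexp : Differentiable ℂ (dslope cexp 0) :=
  differentiableOn_univ.mp <|
    (Complex.differentiableOn_dslope univ_mem).mpr Complex.differentiable_exp.differentiableOn

/-- `e^{xz} (z / (e^z - 1))^r`, the generating function of the Bernoulli polynomials of order `r`;
`dslope` fills in the removable singularity at `z = 0`. -/
noncomputable def bernoulliGenFun (r : ℕ) (x z : ℂ) : ℂ :=
  cexp (x * z) / dslope cexp 0 z ^ r

theorem differentiableOn_bernoulliGenFun (r : ℕ) (x : ℂ) :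
    DifferentiableOn ℂ (bernoulliGenFun r x) (ball 0 (2 * π)) := fun z hz =>
  ((by fun_prop : DifferentiableAt ℂ (fun z => cexp (x * z)) z).div
    ((differentiable_dslope_cexp z).pow r)
    (pow_ne_zero r (dslope_cexp_ne_zero (mem_ball_zero_iff.mp hz)))).differentiableWithinAt

theorem bernoulliGenFun_mul_cexp_sub_one_pow {r : ℕ} {x z : ℂ} (hz : ‖z‖ < 2 * π) :
    bernoulliGenFun r x z * (cexp z - 1) ^ r = z ^ r * cexp (x * z) := by
  have h := sub_smul_dslope cexp 0 z
  rw [sub_zero, smul_eq_mul, Complex.exp_zero] at h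
  have hd := pow_ne_zero r (dslope_cexp_ne_zero hz)
  rw [bernoulliGenFun, ← h, mul_pow]
  field_simp

theorem taylorSeriesAtZero_bernoulliGenFun_shift_mul {a : ℂ} (ha : ‖a‖ < 2 * π) (r : ℕ)
    (x : ℂ) :
    taylorSeriesAtZero (fun t => cexp (-(x * a)) * bernoulliGenFun r x (a + t)) *
        (C (cexp a) * exp ℂ - 1) ^ r =
      (C a + X) ^ r * mk fun m => x ^ m / m ! := by
  have hG : AnalyticAt ℂ (fun t => cexp (-(x * a)) * bernoulliGenFun r x (a + t)) 0 :=
    analyticAt_const.mul <| ((differentiableOn_bernoulliGenFun r x).analyticOnNhd isOpen_ball a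
      (mem_ball_zero_iff.mpr ha)).comp_of_eq (by fun_prop) (add_zero a)
  have hE : AnalyticAt ℂ (fun t => cexp a * cexp t - 1) 0 := by fun_prop
  have hE_series :
      taylorSeriesAtZero (fun t => cexp a * cexp t - 1) = C (cexp a) * exp ℂ - 1 := by
    rw [taylorSeriesAtZero_sub (by fun_prop) analyticAt_const,
      taylorSeriesAtZero_mul analyticAt_const analyticAt_cexp, taylorSeriesAtZero_const,
      taylorSeriesAtZero_const, taylorSeriesAtZero_cexp, map_one]
  have hrhs_series : taylorSeriesAtZero (fun t => (a + t) ^ r * cexp (x * t)) =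
      (C a + X) ^ r * mk fun m => x ^ m / m ! := by
    rw [taylorSeriesAtZero_mul (by fun_prop) (by fun_prop),
      taylorSeriesAtZero_pow (f := fun t => a + t) (by fun_prop),
      taylorSeriesAtZero_add (f := fun _ => a) (g := fun t => t) analyticAt_const analyticAt_id,
      taylorSeriesAtZero_const, taylorSeriesAtZero_id, taylorSeriesAtZero_cexp_const_mul]
  rw [← hE_series, ← hrhs_series, ← taylorSeriesAtZero_pow hE,
    ← taylorSeriesAtZero_mul (g := fun t => (cexp a * cexp t - 1) ^ r) hG (hE.pow r)]
  have hnear : ∀ᶠ t in 𝓝 (0 : ℂ), ‖a + t‖ < 2 * π :=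
    (continuousAt_const.add continuousAt_id).norm.eventually_lt continuousAt_const (by simpa)
  refine taylorSeriesAtZero_congr (hnear.mono fun t ht => ?_)
  dsimp only
  rw [← Complex.exp_add, mul_assoc, bernoulliGenFun_mul_cexp_sub_one_pow ht, mul_left_comm,
    ← Complex.exp_add]
  congr 2
  ring

theorem eq_iteratedDeriv_bernoulliGenFun {a : ℂ} (ha : ‖a‖ < 2 * π) {r : ℕ} {x : ℂ} {S : ℕ → ℂ}
    (hS : (C a + X) ^ r * mk (fun m => x ^ m / m !) =
      (C (cexp a) * exp ℂ - 1) ^ r * mk fun m => S m / m !) (n : ℕ) :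
    S n = cexp (-(x * a)) * iteratedDeriv n (bernoulliGenFun r x) a := by
  have hne : (C (cexp a) * exp ℂ - 1) ^ r ≠ 0 :=
    pow_ne_zero r (C_mul_exp_sub_one_ne_zero (Complex.exp_ne_zero a))
  have hseries := mul_right_cancel₀ hne
    ((taylorSeriesAtZero_bernoulliGenFun_shift_mul ha r x).trans (hS.trans (mul_comm _ _)))
  have hn := congr(coeff n $hseries)
  simp only [coeff_taylorSeriesAtZero, coeff_mk, iteratedDeriv_const_mul_field,
    iteratedDeriv_comp_const_add, add_zero] at hn
  exact ((div_left_inj' (Nat.cast_ne_zero.mpr n.factorial_ne_zero)).mp hn).symm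

theorem Complex.hasSum_iteratedDeriv_taylorSeries_on_ball {f : ℂ → ℂ} {c z : ℂ} {R : ℝ}
    (hf : DifferentiableOn ℂ f (ball c R)) (hz : z ∈ ball c R) (n : ℕ) :
    HasSum (fun l : ℕ => (l ! : ℂ)⁻¹ • (z - c) ^ l • iteratedDeriv (n + l) f c)
      (iteratedDeriv n f z) := by
  have hfn : DifferentiableOn ℂ (iteratedDeriv n f) (ball c R) := by
    rw [iteratedDeriv_eq_iterate]
    exact ((hf.analyticOnNhd isOpen_ball).iterated_deriv n).differentiableOn
  simpa only [iteratedDeriv_eq_iterate, ← Function.iterate_add_apply, add_comm]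
    using Complex.hasSum_taylorSeries_on_ball hfn hz

theorem lambdaBernoulliPoly_order_r_eq_tsum_general (lam : ℂ)
    (hlog : 0 < ‖Complex.log lam‖)
    (hlog2 : ‖Complex.log lam‖ < 2 * Real.pi)
    (x : ℂ) (r : ℕ) (n : ℕ) (B Bb : ℕ → ℂ)
    (hB : (PowerSeries.C (Complex.log lam) + PowerSeries.X) ^ r *
        PowerSeries.mk (fun m => x ^ m / (m.factorial : ℂ)) =
      (PowerSeries.C lam * PowerSeries.exp ℂ - 1) ^ r *
        PowerSeries.mk (fun m => B m / (m.factorial : ℂ)))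
    (hBb : (PowerSeries.X : PowerSeries ℂ) ^ r *
        PowerSeries.mk (fun m => x ^ m / (m.factorial : ℂ)) =
      (PowerSeries.exp ℂ - 1) ^ r *
        PowerSeries.mk (fun m => Bb m / (m.factorial : ℂ))) :
    Summable (fun l : ℕ => ‖Bb (n + l) * Complex.log lam ^ l / (l.factorial : ℂ)‖) ∧
    B n =
      Complex.exp (-x * Complex.log lam) *
        ∑' l : ℕ, Bb (n + l) * Complex.log lam ^ l / (l.factorial : ℂ) := by
  have hlam : lam ≠ 0 := by
    rintro rfl
    simp at hlog -- `Complex.log 0 = 0`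
  have hBn := eq_iteratedDeriv_bernoulliGenFun hlog2 (by rwa [Complex.exp_log hlam]) n
  have hBb_deriv (m : ℕ) : Bb m = iteratedDeriv m (bernoulliGenFun r x) 0 := by
    simpa using eq_iteratedDeriv_bernoulliGenFun (a := 0) (by simp [Real.pi_pos])
      (by simpa using hBb) m
  have hTaylor : HasSum (fun l : ℕ => Bb (n + l) * Complex.log lam ^ l / l !)
      (iteratedDeriv n (bernoulliGenFun r x) (Complex.log lam)) := by
    refine (Complex.hasSum_iteratedDeriv_taylorSeries_on_ball
      (differentiableOn_bernoulliGenFun r x) (mem_ball_zero_iff.mpr hlog2) n).congr_fun fun l => ?_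
    rw [hBb_deriv, sub_zero, smul_eq_mul, smul_eq_mul]
    ring
  exact ⟨summable_norm_iff.mpr hTaylor.summable, by rw [hBn, hTaylor.tsum_eq, neg_mul]⟩

/-- let `λ ∈ ℂ` with `λ ≠ 1` and `0 < |Log λ| < 2π` (principal branch),
`x ∈ ℂ`, and integers `r ≥ 1`, `n ≥ 0`. If `B m = B_m^{(r)}(λ; x)` are the λ-Bernoulli
polynomials of order `r`, defined by the formal power series identity
`(Log λ + t)^r · e^{xt} = (λ·e^t - 1)^r · ∑_{m≥0} B_m^{(r)}(λ; x)·t^m/m!`, and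
`Bb m = B_m^{(r)}(x)` are the ordinary Bernoulli polynomials of order `r`, defined by
`t^r · e^{xt} = (e^t - 1)^r · ∑_{m≥0} B_m^{(r)}(x)·t^m/m!`, then the series
`∑_{l≥0} B_{n+l}^{(r)}(x)·(Log λ)^l/l!` converges absolutely and
`B_n^{(r)}(λ; x) = e^{-x·Log λ}·∑_{l≥0} B_{n+l}^{(r)}(x)·(Log λ)^l/l!`. -/
theorem lambdaBernoulliPoly_order_r_eq_tsum (lam : ℂ) (h1 : lam ≠ 1)
    (hlog : 0 < ‖Complex.log lam‖)
    (hlog2 : ‖Complex.log lam‖ < 2 * Real.pi)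
    (x : ℂ) (r : ℕ) (hr : 1 ≤ r) (n : ℕ) (B Bb : ℕ → ℂ)
    (hB : (PowerSeries.C (Complex.log lam) + PowerSeries.X) ^ r *
        PowerSeries.mk (fun m => x ^ m / (m.factorial : ℂ)) =
      (PowerSeries.C lam * PowerSeries.exp ℂ - 1) ^ r *
        PowerSeries.mk (fun m => B m / (m.factorial : ℂ)))
    (hBb : (PowerSeries.X : PowerSeries ℂ) ^ r *
        PowerSeries.mk (fun m => x ^ m / (m.factorial : ℂ)) =
      (PowerSeries.exp ℂ - 1) ^ r *
        PowerSeries.mk (fun m => Bb m / (m.factorial : ℂ))) :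
    Summable (fun l : ℕ => ‖Bb (n + l) * Complex.log lam ^ l / (l.factorial : ℂ)‖) ∧
    B n =
      Complex.exp (-x * Complex.log lam) *
        ∑' l : ℕ, Bb (n + l) * Complex.log lam ^ l / (l.factorial : ℂ) :=
  lambdaBernoulliPoly_order_r_eq_tsum_general lam hlog hlog2 x r n B Bb hB hBb
end

section
/- Let λ be a real number with 0 < λ < 1, let F ≥ 1 and 1 ≤ a ≤ F be integers, and let s ∈ ℂ with s ≠ 1. Then H_λ(s, a|F) = λ^a·F^{−s}·ζ_{λ^F}(s, a/F), where F^{−s} = exp(−s·log F). -/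
/-- The λ-partial zeta function, for real `0 < λ < 1` and integers `F ≥ 1`, `1 ≤ a ≤ F`:
`H_λ(s, a|F) = ∑_{m≥1, m≡a (mod F)} λ^m·m^{-s} - (log λ/(s - 1))·∑_{m≥1, m≡a (mod F)} λ^m·m^{1-s}`,
complex powers of the positive integer `m` being taken via the real logarithm. -/
noncomputable def lambdaPartialZeta (lam : ℝ) (F a : ℕ) (s : ℂ) : ℂ :=
  (∑' m : {m : ℕ // 0 < m ∧ m % F = a % F}, (lam : ℂ) ^ (m : ℕ) * ((m : ℕ) : ℂ) ^ (-s)) -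
    ((Real.log lam : ℂ) / (s - 1)) *
      ∑' m : {m : ℕ // 0 < m ∧ m % F = a % F}, (lam : ℂ) ^ (m : ℕ) * ((m : ℕ) : ℂ) ^ (1 - s)

noncomputable def lamEquiv (F a : ℕ) (hF : 1 ≤ F) (ha1 : 1 ≤ a) (ha2 : a ≤ F) :
    ℕ ≃ {m : ℕ // 0 < m ∧ m % F = a % F} where
  toFun n := ⟨a + n * F, by omega, by simp [Nat.add_mul_mod_self_right]⟩
  invFun m := (m.1 - a) / F
  left_inv n := by
    have hF0 : 0 < F := hF
    simp [Nat.add_sub_cancel_left, Nat.mul_div_cancel _ hF0]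
  right_inv := fun ⟨m, hm, hmod⟩ => by
    have hF0 : 0 < F := hF
    have hle : a ≤ m := by
      rcases eq_or_lt_of_le ha2 with h | h
      · have hd : F ∣ m := Nat.dvd_of_mod_eq_zero (by rw [hmod, h, Nat.mod_self])
        exact le_trans (le_of_eq h) (Nat.le_of_dvd hm hd)
      · have hmm : a % F = a := Nat.mod_eq_of_lt h
        calc a = m % F := by omega
        _ ≤ m := Nat.mod_le m F
    have hdvd : F ∣ m - a := (Nat.modEq_iff_dvd' hle).mp hmod.symm
    apply Subtype.ext
    show a + (m - a) / F * F = m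
    rw [Nat.div_mul_cancel hdvd]
    omega

/-- for real `0 < λ < 1`, integers `F ≥ 1`, `1 ≤ a ≤ F`, and `s ∈ ℂ`, `s ≠ 1`:
`H_λ(s, a|F) = λ^a·F^{-s}·ζ_{λ^F}(s, a/F)`, where `F^{-s} = exp(-s·log F)`. -/
theorem lambdaPartialZeta_eq_hurwitzLambdaZeta (lam : ℝ) (h0 : 0 < lam) (h1 : lam < 1)
    (F a : ℕ) (hF : 1 ≤ F) (ha1 : 1 ≤ a) (ha2 : a ≤ F) (s : ℂ) (hs : s ≠ 1) :
    lambdaPartialZeta lam F a s =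
      (lam : ℂ) ^ a * (F : ℂ) ^ (-s) * hurwitzLambdaZeta (lam ^ F) ((a : ℝ) / F) s := by
  have hFn : F ≠ 0 := by omega
  have hFR : (0:ℝ) < F := by exact_mod_cast hF
  have hFC : (F:ℂ) ≠ 0 := Nat.cast_ne_zero.mpr hFn
  set x : ℝ := (a:ℝ)/F with hxdef
  have hx0 : 0 ≤ x := by positivity
  have key : ∀ (c : ℂ) (n : ℕ),
      (lam:ℂ)^(a+n*F) * (((a+n*F : ℕ)):ℂ)^c
        = ((lam:ℂ)^a * (F:ℂ)^c) * ((((lam^F : ℝ)):ℂ)^n * ((((n:ℝ) + x : ℝ)):ℂ)^c) := by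
    intro c n
    have h1 : ((a + n*F : ℕ) : ℝ) = F * ((n:ℝ) + x) := by
      rw [hxdef]; field_simp; push_cast; ring
    have h2 : (((a + n*F : ℕ)):ℂ) = (((F:ℝ) * ((n:ℝ)+x) : ℝ):ℂ) := by
      rw [← h1]; push_cast; ring
    rw [h2, Complex.ofReal_mul,
      Complex.mul_cpow_ofReal_nonneg hFR.le (by positivity), pow_add, pow_mul']
    push_cast
    ring
  have hT : ∀ c : ℂ,
      (∑' m : {m : ℕ // 0 < m ∧ m % F = a % F}, (lam : ℂ) ^ (m : ℕ) * ((m : ℕ) : ℂ) ^ c)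
        = ((lam:ℂ)^a * (F:ℂ)^c) *
            ∑' n : ℕ, (((lam^F : ℝ)):ℂ)^n * ((((n:ℝ)+x : ℝ)):ℂ)^c := by
    intro c
    rw [← (lamEquiv F a hF ha1 ha2).tsum_eq, ← tsum_mul_left]
    apply tsum_congr
    intro n
    simp only [lamEquiv, Equiv.coe_fn_mk]
    exact key c n
  rw [lambdaPartialZeta, hurwitzLambdaZeta, hT, hT]
  have hlog : (Real.log (lam ^ F) : ℂ) = (F : ℂ) * (Real.log lam : ℂ) := by
    rw [Real.log_pow]; push_cast; ring
  have hFs : (F:ℂ)^((1:ℂ)-s) = (F:ℂ) * (F:ℂ)^(-s) := by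
    rw [show (1:ℂ) - s = 1 + (-s) by ring, Complex.cpow_add _ _ hFC, Complex.cpow_one]
  rw [hlog, hFs]
  have h1s : (1:ℂ) - s ≠ 0 := fun h => hs (by linear_combination -h)
  have hs1 : s - 1 ≠ 0 := fun h => hs (by linear_combination h)
  field_simp
  ring
end

section
/- For every integer n ≥ 0, B_n(λ) tends to the n-th Bernoulli number B_n as λ → 1 with λ ranging over ℂ ∖ {0, 1}; here the Bernoulli numbers are those defined by t/(e^t − 1) = ∑_{n≥0} B_n·t^n/n! (so B_1 = −1/2). -/
/-!
Let `F(z) = z / (e^z - 1)`, holomorphic wherever `(e^z - 1)/z` (extended by `1` at `0`) does not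
vanish. Differentiating `e^z F(z) = F(z) + z` `n` times by Leibniz' rule gives
`e^z ∑_k C(n,k) F^(k)(z) = F^(n)(z) + z^(n)`. At `z = 0` this is the recurrence of the Bernoulli
numbers, so `F^(n)(0) = B_n`; at `z = Log λ` it is the recurrence defining `B_n(λ)`, so
`B_n(λ) = F^(n)(Log λ)`. The theorem follows from the continuity of `F^(n)` at `0`, since
`Log λ → 0` as `λ → 1`.
-/

open Complex Filter Finset Topology

lemma eq_of_sum_range_choose_mul_eq {R : Type*} [Ring R] [IsDomain R] [CharZero R]
    {a b c : ℕ → R} (ha : ∀ n, ∑ k ∈ range (n + 1), ((n + 1).choose k : R) * a k = c n)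
    (hb : ∀ n, ∑ k ∈ range (n + 1), ((n + 1).choose k : R) * b k = c n) : a = b := by
  funext n
  induction n using Nat.strong_induction_on with
  | _ n ih =>
    have hsum := (ha n).trans (hb n).symm
    rw [sum_range_succ, sum_range_succ,
      sum_congr rfl fun k hk => by rw [ih k (mem_range.1 hk)]] at hsum
    have hchoose : ((n + 1).choose n : R) ≠ 0 := Nat.cast_ne_zero.2 (Nat.choose_pos n.le_succ).ne'
    exact mul_left_cancel₀ hchoose (add_left_cancel hsum)

noncomputable def expSlope : ℂ → ℂ := dslope (fun z => cexp z - 1) 0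

noncomputable def bernoulliGen (z : ℂ) : ℂ := (expSlope z)⁻¹

lemma differentiable_expSlope : Differentiable ℂ expSlope := by
  rw [← differentiableOn_univ, expSlope, Complex.differentiableOn_dslope univ_mem,
    differentiableOn_univ]
  fun_prop

lemma expSlope_zero : expSlope 0 = 1 := by
  simp [expSlope, dslope_same]

lemma expSlope_mul_self (z : ℂ) : expSlope z * z = cexp z - 1 := by
  simpa [expSlope, mul_comm] using sub_smul_dslope (fun z => cexp z - 1) 0 z

lemma analyticAt_bernoulliGen {z : ℂ} (hz : expSlope z ≠ 0) : AnalyticAt ℂ bernoulliGen z :=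
  (differentiable_expSlope.analyticAt z).inv hz

lemma cexp_mul_bernoulliGen {z : ℂ} (hz : expSlope z ≠ 0) :
    cexp z * bernoulliGen z = bernoulliGen z + z := by
  rw [bernoulliGen, ← sub_eq_iff_eq_add', ← sub_one_mul, ← expSlope_mul_self, mul_right_comm,
    mul_inv_cancel₀ hz, one_mul]

lemma cexp_mul_sum_iteratedDeriv_bernoulliGen {z : ℂ} (hz : expSlope z ≠ 0) (n : ℕ) :
    cexp z * ∑ k ∈ range (n + 1), (n.choose k : ℂ) * iteratedDeriv k bernoulliGen z =
      iteratedDeriv n bernoulliGen z + if n = 0 then z else if n = 1 then 1 else 0 := by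
  have hF := analyticAt_bernoulliGen hz
  have heq : (fun w => bernoulliGen w * cexp w) =ᶠ[𝓝 z] fun w => bernoulliGen w + w := by
    filter_upwards [differentiable_expSlope.continuous.continuousAt.eventually_ne hz] with w hw
    rw [mul_comm, cexp_mul_bernoulliGen hw]
  have h := heq.iteratedDeriv_eq n
  rw [iteratedDeriv_fun_mul hF.contDiffAt analyticAt_cexp.contDiffAt,
    iteratedDeriv_fun_add hF.contDiffAt contDiffAt_fun_id, iteratedDeriv_fun_id] at h
  simp only [iteratedDeriv_eq_iterate, Complex.iter_deriv_exp] at h ⊢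
  rw [← h, mul_sum]
  exact sum_congr rfl fun k _ => by ring

lemma iteratedDeriv_bernoulliGen_zero (n : ℕ) :
    iteratedDeriv n bernoulliGen 0 = ((bernoulli n : ℚ) : ℂ) := by
  refine congrFun (eq_of_sum_range_choose_mul_eq (a := fun k => iteratedDeriv k bernoulliGen 0)
    (b := fun k => ((bernoulli k : ℚ) : ℂ)) (c := fun n => if n = 0 then 1 else 0)
    (fun n => ?_) (fun n => ?_)) n
  · have h := cexp_mul_sum_iteratedDeriv_bernoulliGen (expSlope_zero ▸ one_ne_zero) (n + 1)
    rw [sum_range_succ, Nat.choose_self, Complex.exp_zero] at h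
    simp only [one_mul, Nat.cast_one, Nat.add_eq_zero_iff, one_ne_zero, and_false, if_false,
      Nat.add_eq_right] at h
    exact add_right_cancel (h.trans (add_comm _ _))
  · have h := congrArg ((↑) : ℚ → ℂ) (sum_bernoulli (n + 1))
    push_cast [Nat.add_eq_right] at h
    exact h.trans (by split_ifs <;> simp)

lemma lambdaBernoulli_eq_iteratedDeriv_bernoulliGen {lam : ℂ} (h0 : lam ≠ 0) (h1 : lam ≠ 1)
    (n : ℕ) : lambdaBernoulli lam n = iteratedDeriv n bernoulliGen (log lam) := by
  have hsub : lam - 1 = expSlope (log lam) * log lam := by rw [expSlope_mul_self, exp_log h0]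
  have hne : expSlope (log lam) * log lam ≠ 0 := hsub ▸ sub_ne_zero.2 h1
  induction n using Nat.strong_induction_on with
  | _ n ih =>
    rcases n with _ | n
    · rw [lambdaBernoulli, iteratedDeriv_zero, bernoulliGen, hsub,
        div_mul_cancel_right₀ (right_ne_zero_of_mul hne)]
    · have h := cexp_mul_sum_iteratedDeriv_bernoulliGen (left_ne_zero_of_mul hne) (n + 1)
      rw [exp_log h0, sum_range_succ, Nat.choose_self, Nat.cast_one, one_mul] at h
      have hsum : ∑ k : Fin (n + 1), ((n + 1).choose k : ℂ) * lambdaBernoulli lam k =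
          ∑ k ∈ range (n + 1), ((n + 1).choose k : ℂ) * iteratedDeriv k bernoulliGen (log lam) := by
        rw [Fin.sum_univ_eq_sum_range (fun k => ((n + 1).choose k : ℂ) * lambdaBernoulli lam k)]
        exact sum_congr rfl fun k hk => by rw [ih k (mem_range.1 hk)]
      rw [lambdaBernoulli, hsum, div_eq_iff (sub_ne_zero.2 h1)]
      simp only [Nat.add_eq_zero_iff, one_ne_zero, and_false, if_false, Nat.add_eq_right] at h
      linear_combination -h

/-- for every `n ≥ 0`, `B_n(λ)` tends to the `n`-th Bernoulli number `B_n`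
(with the convention `B_1 = -1/2`, i.e. `t/(e^t - 1) = ∑ B_n t^n/n!`) as `λ → 1` with
`λ` ranging over `ℂ \ {0, 1}`. -/
theorem lambdaBernoulli_tendsto_bernoulli (n : ℕ) :
    Filter.Tendsto (fun lam : ℂ => lambdaBernoulli lam n)
      (nhdsWithin 1 {z : ℂ | z ≠ 0 ∧ z ≠ 1}) (nhds ((bernoulli n : ℚ) : ℂ)) := by
  have hcont : ContinuousAt (iteratedDeriv n bernoulliGen) 0 := by
    rw [iteratedDeriv_eq_iterate]
    exact ((analyticAt_bernoulliGen (expSlope_zero ▸ one_ne_zero)).iterated_deriv n).continuousAt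
  have hlog : Tendsto log (𝓝[{z : ℂ | z ≠ 0 ∧ z ≠ 1}] 1) (𝓝 0) := by
    simpa using (continuousAt_clog one_mem_slitPlane).tendsto.mono_left nhdsWithin_le_nhds
  rw [← iteratedDeriv_bernoulliGen_zero]
  refine (hcont.tendsto.comp hlog).congr' ?_
  filter_upwards [self_mem_nhdsWithin] with lam hlam
  exact (lambdaBernoulli_eq_iteratedDeriv_bernoulliGen hlam.1 hlam.2 n).symm
end

section
/- Let p be a prime and let f be a polynomial with coefficients in ℚ_p. Then the sequence N ↦ p^{−N}·(∑_{x=0}^{p^N−1} f(x + 1) − ∑_{x=0}^{p^N−1} f(x)) converges in ℚ_p to f′(0), the value at 0 of the formal derivative of f. -/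
/-! The difference of the two Riemann sums telescopes to `f(p^N) - f(0)`, so the sequence is the
difference quotient of `f` at `0` with increment `p^N`. Since `p^N → 0` in `ℚ_p` through nonzero
values, it converges to the derivative of `f` at `0`. -/

open Filter Topology Finset

theorem sum_range_comp_add_one_sub {R G : Type*} [AddMonoidWithOne R] [AddCommGroup G]
    (g : R → G) (n : ℕ) :
    ∑ x ∈ range n, g ((x : R) + 1) - ∑ x ∈ range n, g x = g n - g 0 := by
  rw [← sum_sub_distrib]
  simpa using sum_range_sub (fun k : ℕ => g k) n

theorem tendsto_pow_atTop_nhdsNE_zero {𝕜 : Type*} [NormedDivisionRing 𝕜] {a : 𝕜} (h0 : a ≠ 0)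
    (h1 : ‖a‖ < 1) : Tendsto (fun n : ℕ => a ^ n) atTop (𝓝[≠] 0) :=
  tendsto_nhdsWithin_iff.2
    ⟨tendsto_pow_atTop_nhds_zero_of_norm_lt_one h1, Eventually.of_forall fun n => pow_ne_zero n h0⟩

/-- for a prime `p` and a polynomial `f` over `ℚ_p`, the sequence
`N ↦ p^{-N}·(∑_{x=0}^{p^N-1} f(x + 1) - ∑_{x=0}^{p^N-1} f(x))` converges in `ℚ_p` to `f′(0)`.
This is the fundamental equation `I_1(f(·+1)) = I_1(f) + f′(0)` of the p-adic invariant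
(Volkenborn) integral, for polynomial integrands. -/
theorem volkenborn_integral_equation (p : ℕ) [Fact p.Prime] (f : Polynomial ℚ_[p]) :
    Filter.Tendsto
      (fun N : ℕ =>
        ((p : ℚ_[p]) ^ N)⁻¹ *
          ((∑ x ∈ Finset.range (p ^ N), f.eval ((x : ℚ_[p]) + 1)) -
            ∑ x ∈ Finset.range (p ^ N), f.eval (x : ℚ_[p])))
      Filter.atTop (nhds (f.derivative.eval 0)) := by
  have hp : (p : ℚ_[p]) ≠ 0 := Nat.cast_ne_zero.2 (Fact.out : p.Prime).ne_zero
  have hslope := (f.hasDerivAt 0).tendsto_slope.comp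
    (tendsto_pow_atTop_nhdsNE_zero hp Padic.norm_p_lt_one)
  refine hslope.congr fun N => ?_
  rw [Function.comp_apply, slope_def_module, sum_range_comp_add_one_sub (fun x => f.eval x),
    Nat.cast_pow, sub_zero, smul_eq_mul]
end
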